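/- arXiv:0901.0834 — 10 statements merged into one kernel-verified Lean document; each statement's English description precedes it below -/
import Mathlib

section
/- (Data Processing Theorem for smooth 0-divergence) Let P and Q be probability mass functions on a finite set Ω, and let W be a stochastic kernel from Ω to a finite set Ω' (i.e., W(·|ω) is a probability mass function on Ω' for each ω ∈ Ω). Then for all δ ≥ 0, D₀^δ(P‖Q) ≥ D₀^δ(W∘P‖W∘Q), where (W∘P)(ω') = ∑_ω W(ω'|ω) P(ω) and similarly for W∘Q. -/
/-!
A test `Φ'` on `Ω'` pulls back through the kernel to the test `ω ↦ ∑ ω', Φ' ω' * W ω ω'` on `Ω`,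
which again takes values in `[0, 1]` and assigns to `P` and `Q` exactly the masses that `Φ'`
assigns to `W ∘ P` and `W ∘ Q`. So every value in the supremum defining the left-hand side also
occurs in the supremum defining the right-hand side.
-/

open scoped BigOperators Classical

/-- `-log₂ s` with the convention `-log₂ 0 = +∞`, valued in the extended reals. -/
noncomputable def negLog2 (s : ℝ) : EReal :=
  if s = 0 then ⊤ else ((-Real.logb 2 s : ℝ) : EReal)

/-- `P` is a probability mass function on the finite set `Ω`. -/
def IsPmf {Ω : Type*} [Fintype Ω] (P : Ω → ℝ) : Prop :=
  (∀ x, 0 ≤ P x) ∧ ∑ x, P x = 1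

/-- The smooth `0`-divergence
`D₀^δ(P‖Q) = sup { -log₂ (∑_x Φ x * Q x) : Φ : Ω → [0,1], ∑_x Φ x * P x ≥ 1 - δ }`. -/
noncomputable def D0smooth {Ω : Type*} [Fintype Ω] (P Q : Ω → ℝ) (δ : ℝ) : EReal :=
  sSup { r : EReal | ∃ Φ : Ω → ℝ, (∀ x, 0 ≤ Φ x ∧ Φ x ≤ 1) ∧
    1 - δ ≤ ∑ x, Φ x * P x ∧ r = negLog2 (∑ x, Φ x * Q x) }

/-- Rényi's divergence of order `0`: `D₀(P‖Q) = -log₂ (∑_{x : P x > 0} Q x)`. -/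
noncomputable def D0 {Ω : Type*} [Fintype Ω] (P Q : Ω → ℝ) : EReal :=
  negLog2 (∑ x ∈ Finset.univ.filter (fun x => 0 < P x), Q x)

open Finset

section TestPullback

variable {Ω Ω' : Type*} [Fintype Ω']

noncomputable def testPullback (W : Ω → Ω' → ℝ) (Φ' : Ω' → ℝ) (ω : Ω) : ℝ :=
  ∑ ω', Φ' ω' * W ω ω'

theorem testPullback_mem_Icc {W : Ω → Ω' → ℝ} (hW : ∀ ω, IsPmf (W ω)) {Φ' : Ω' → ℝ}
    (hΦ' : ∀ ω', 0 ≤ Φ' ω' ∧ Φ' ω' ≤ 1) (ω : Ω) :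
    0 ≤ testPullback W Φ' ω ∧ testPullback W Φ' ω ≤ 1 := by
  refine ⟨sum_nonneg fun ω' _ => mul_nonneg (hΦ' ω').1 ((hW ω).1 ω'), ?_⟩
  calc testPullback W Φ' ω ≤ ∑ ω', W ω ω' :=
        sum_le_sum fun ω' _ => mul_le_of_le_one_left ((hW ω).1 ω') (hΦ' ω').2
    _ = 1 := (hW ω).2

theorem sum_mul_kernel_eq_sum_testPullback_mul [Fintype Ω] (W : Ω → Ω' → ℝ) (Φ' : Ω' → ℝ)
    (R : Ω → ℝ) :
    ∑ ω', Φ' ω' * ∑ ω, W ω ω' * R ω = ∑ ω, testPullback W Φ' ω * R ω := by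
  simp only [testPullback, mul_sum, sum_mul]
  rw [sum_comm]
  exact sum_congr rfl fun _ _ => sum_congr rfl fun _ _ => by ring

end TestPullback

theorem D0smooth_data_processing_general {Ω Ω' : Type*} [Fintype Ω] [Fintype Ω']
    (P Q : Ω → ℝ)
    (W : Ω → Ω' → ℝ) (hW : ∀ ω, IsPmf (W ω)) (δ : ℝ) :
    D0smooth (fun ω' => ∑ ω, W ω ω' * P ω) (fun ω' => ∑ ω, W ω ω' * Q ω) δ
      ≤ D0smooth P Q δ := by
  apply sSup_le_sSup
  rintro r ⟨Φ', hΦ', hmassP, rfl⟩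
  refine ⟨testPullback W Φ', testPullback_mem_Icc hW hΦ', ?_, ?_⟩
  · rwa [← sum_mul_kernel_eq_sum_testPullback_mul]
  · rw [sum_mul_kernel_eq_sum_testPullback_mul]

/-- Data processing theorem for the smooth `0`-divergence:
applying a stochastic kernel `W` cannot increase `D₀^δ`. -/
theorem D0smooth_data_processing {Ω Ω' : Type*} [Fintype Ω] [Fintype Ω']
    (P Q : Ω → ℝ) (hP : IsPmf P) (hQ : IsPmf Q)
    (W : Ω → Ω' → ℝ) (hW : ∀ ω, IsPmf (W ω)) (δ : ℝ) (hδ : 0 ≤ δ) :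
    D0smooth (fun ω' => ∑ ω, W ω ω' * P ω) (fun ω' => ∑ ω, W ω ω' * Q ω) δ
      ≤ D0smooth P Q δ :=
  D0smooth_data_processing_general P Q W hW δ
end

section
/- Let M be uniformly distributed on {1,…,m} and let M̂ be a random variable on {1,…,m} jointly distributed with M such that Pr[M̂ ≠ M] ≤ ε, where 0 ≤ ε < 1. Then log m ≤ D₀^ε(P_{MM̂} ‖ P_M × P_{M̂}), where P_{MM̂} is the joint distribution and P_M, P_{M̂} are its marginals. -/
open scoped BigOperators Classical

/-!
Test the hypothesis `M̂ = M` against `M̂ ≠ M`, i.e. take `Φ` to be the indicator of the diagonal.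
Under `P_{MM̂}` it has mass `Pr[M̂ = M] ≥ 1 - ε`, while under `P_M × P_{M̂}` it has mass
`∑_j P_M(j) P_{M̂}(j) = 1/m`, so `D₀^ε(P_{MM̂} ‖ P_M × P_{M̂}) ≥ -log₂ (1/m) = log₂ m`.
-/

theorem logb_two_le_negLog2_inv (x : ℝ) : (Real.logb 2 x : EReal) ≤ negLog2 x⁻¹ := by
  by_cases hx : x = 0
  · simp [negLog2, hx]
  · simp [negLog2, hx, Real.logb_inv]

theorem negLog2_le_D0smooth {Ω : Type*} [Fintype Ω] {P Q Φ : Ω → ℝ} {δ : ℝ}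
    (hΦ : ∀ x, 0 ≤ Φ x ∧ Φ x ≤ 1) (hP : 1 - δ ≤ ∑ x, Φ x * P x) :
    negLog2 (∑ x, Φ x * Q x) ≤ D0smooth P Q δ :=
  le_sSup ⟨Φ, hΦ, hP, rfl⟩

section DiagonalTest

variable {α : Type*} [DecidableEq α]

def diagonalTest (x : α × α) : ℝ := if x.1 = x.2 then 1 else 0

theorem diagonalTest_mem_unitInterval (x : α × α) : 0 ≤ diagonalTest x ∧ diagonalTest x ≤ 1 := by
  unfold diagonalTest
  split_ifs <;> norm_num

theorem sum_diagonalTest_mul [Fintype α] (f : α × α → ℝ) :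
    ∑ x, diagonalTest x * f x = ∑ a, f (a, a) := by
  simp [diagonalTest, Fintype.sum_prod_type]

end DiagonalTest

theorem log_le_D0smooth_of_lowError_general (m : ℕ) (ε : ℝ)
    (J : Fin m × Fin m → ℝ) (hJ : IsPmf J)
    (hErr : 1 - ε ≤ ∑ i : Fin m, J (i, i)) :
    (Real.logb 2 m : EReal)
      ≤ D0smooth J (fun p => (1 / m) * ∑ i : Fin m, J (i, p.2)) ε := by
  have hdiag : 1 - ε ≤ ∑ x, diagonalTest x * J x := by rwa [sum_diagonalTest_mul]
  have hprod : ∑ x, diagonalTest x * ((1 / m) * ∑ i : Fin m, J (i, x.2)) = (m : ℝ)⁻¹ := by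
    rw [sum_diagonalTest_mul, ← Finset.mul_sum, Finset.sum_comm, ← Fintype.sum_prod_type', hJ.2,
      one_div, mul_one]
  calc (Real.logb 2 m : EReal) ≤ negLog2 (m : ℝ)⁻¹ := logb_two_le_negLog2_inv _
    _ ≤ _ := hprod ▸ negLog2_le_D0smooth diagonalTest_mem_unitInterval hdiag

/-- If `M` is uniform on `{1,…,m}` and `Pr[M̂ ≠ M] ≤ ε`, then
`log₂ m ≤ D₀^ε(P_{MM̂} ‖ P_M × P_M̂)`. -/
theorem log_le_D0smooth_of_lowError (m : ℕ) (hm : 1 ≤ m) (ε : ℝ)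
    (hε0 : 0 ≤ ε) (hε1 : ε < 1)
    (J : Fin m × Fin m → ℝ) (hJ : IsPmf J)
    (hUnif : ∀ i : Fin m, ∑ j : Fin m, J (i, j) = 1 / m)
    (hErr : 1 - ε ≤ ∑ i : Fin m, J (i, i)) :
    (Real.logb 2 m : EReal)
      ≤ D0smooth J (fun p => (1 / m) * ∑ i : Fin m, J (i, p.2)) ε :=
  log_le_D0smooth_of_lowError_general m ε J hJ hErr
end

section
/- (Random-coding error bound) Let X, Y be finite sets, P_{Y|X} a stochastic kernel from X to Y, P_X a distribution on X inducing joint distribution P_{XY} and output marginal P_Y. Let Φ : X × Y → [0,1] satisfy ∑_{x,y} Φ(x,y) P_{XY}(x,y) ≥ 1 - ε'. For a codebook of m codewords drawn i.i.d. from P_X and the randomized decoder that, upon receiving y, selects each message j independently with probability Φ(f(j),y) and succeeds iff exactly the transmitted message is selected, the average error probability (over codebooks, messages, channel, and decoder randomness) is at most (m-1)·∑_{x,y} Φ(x,y) P_X(x) P_Y(y) + ε'. -/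
open scoped BigOperators Classical

/-! Average over the random codebook message by message. Given that message `i` is sent, the
decoder errs iff it misses `i` or selects some `j ≠ i`, so by the union bound its error is at most
the miss probability plus the `m - 1` false-selection probabilities. The codewords are i.i.d.
`P_X`: the miss term averages to `1 - ∑ Φ P_{XY} ≤ ε'`, and for `j ≠ i` the codeword `f j` is
independent of `(f i, y)`, so each false-selection term averages to `∑ Φ (P_X × P_Y)`. -/

section IidExpectation

variable {ι X R : Type*} [Fintype ι] [DecidableEq ι] [Fintype X] [CommSemiring R] (P : X → R)

theorem sum_prod_mul_prod_apply (g : ι → X → R) :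
    ∑ f : ι → X, (∏ j, P (f j)) * ∏ j, g j (f j) = ∏ j, ∑ x, P x * g j x := by
  simp_rw [← Finset.prod_mul_distrib]
  exact (Fintype.prod_sum fun j x => P x * g j x).symm

variable {P}

theorem sum_prod_mul_apply (hP : ∑ x, P x = 1) (i : ι) (g : X → R) :
    ∑ f : ι → X, (∏ j, P (f j)) * g (f i) = ∑ x, P x * g x := by
  simpa [hP] using sum_prod_mul_prod_apply P fun j x => if j = i then g x else 1

theorem sum_prod_mul_apply_mul_apply (hP : ∑ x, P x = 1) {i k : ι} (hik : i ≠ k)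
    (g h : X → R) :
    ∑ f : ι → X, (∏ j, P (f j)) * (g (f i) * h (f k)) =
      (∑ x, P x * g x) * ∑ x, P x * h x := by
  set G : ι → X → R := fun j x => if j = i then g x else if j = k then h x else 1
  have hG (u : ι → R) (hu : ∀ j, j ≠ i → j ≠ k → u j = 1) : ∏ j, u j = u i * u k :=
    Finset.prod_eq_mul i k hik (fun j _ hj => hu j hj.1 hj.2) (by simp) (by simp)
  have hprod (f : ι → X) : ∏ j, G j (f j) = g (f i) * h (f k) := by
    rw [hG _ fun j hi hk => by simp [G, hi, hk]]
    simp [G, hik.symm]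
  have hmean : ∏ j, ∑ x, P x * G j x = (∑ x, P x * g x) * ∑ x, P x * h x := by
    rw [hG _ fun j hi hk => by simp [G, hi, hk, hP]]
    simp [G, hik.symm]
  simpa only [hprod, hmean] using sum_prod_mul_prod_apply P G

end IidExpectation

theorem Finset.one_sub_sum_le_prod_one_sub {ι : Type*} (s : Finset ι) {b : ι → ℝ}
    (hb : ∀ j ∈ s, 0 ≤ b j ∧ b j ≤ 1) :
    1 - ∑ j ∈ s, b j ≤ ∏ j ∈ s, (1 - b j) := by
  classical
  induction s using Finset.induction with
  | empty => simp
  | insert a s ha ih =>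
    rw [Finset.sum_insert ha, Finset.prod_insert ha]
    obtain ⟨hb0, hb1⟩ := hb a (Finset.mem_insert_self a s)
    have hb' : ∀ j ∈ s, 0 ≤ b j ∧ b j ≤ 1 := fun j hj => hb j (Finset.mem_insert_of_mem hj)
    have hsum : 0 ≤ ∑ j ∈ s, b j := Finset.sum_nonneg fun j hj => (hb' j hj).1
    nlinarith [ih hb']

theorem one_sub_mul_prod_one_sub_le {ι : Type*} (s : Finset ι) {a : ℝ} {b : ι → ℝ}
    (ha : 0 ≤ a ∧ a ≤ 1) (hb : ∀ j ∈ s, 0 ≤ b j ∧ b j ≤ 1) :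
    1 - a * ∏ j ∈ s, (1 - b j) ≤ (1 - a) + ∑ j ∈ s, b j := by
  have hsum : 0 ≤ ∑ j ∈ s, b j := Finset.sum_nonneg fun j hj => (hb j hj).1
  nlinarith [s.one_sub_sum_le_prod_one_sub hb]

section RandomCoding

open Finset

variable {ι X Y : Type*} [Fintype ι] [DecidableEq ι] [Fintype X] [Fintype Y]
  {W : X → Y → ℝ} {PX : X → ℝ}

theorem codebook_avg_miss_eq (hW : ∀ x, ∑ y, W x y = 1) (hPX : ∑ x, PX x = 1)
    (Φ : X → Y → ℝ) (i : ι) :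
    ∑ f : ι → X, (∏ j, PX (f j)) * ∑ y, W (f i) y * (1 - Φ (f i) y) =
      1 - ∑ x, ∑ y, Φ x y * (PX x * W x y) := by
  rw [sum_prod_mul_apply hPX i fun x => ∑ y, W x y * (1 - Φ x y)]
  simp only [mul_one_sub, sum_sub_distrib, hW, mul_sum, hPX]
  congr 2 with x
  congr 1 with y
  ring

theorem codebook_avg_confusion_eq (hPX : ∑ x, PX x = 1) (Φ : X → Y → ℝ) {i k : ι}
    (hik : i ≠ k) :
    ∑ f : ι → X, (∏ j, PX (f j)) * ∑ y, W (f i) y * Φ (f k) y =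
      ∑ x, ∑ y, Φ x y * (PX x * ∑ x', PX x' * W x' y) := by
  calc _ = ∑ y, ∑ f : ι → X, (∏ j, PX (f j)) * (W (f i) y * Φ (f k) y) := by
        simp_rw [mul_sum]
        exact sum_comm
    _ = ∑ y, (∑ x, PX x * W x y) * ∑ x, PX x * Φ x y := by
        congr 1 with y
        exact sum_prod_mul_apply_mul_apply hPX hik (fun x => W x y) (fun x => Φ x y)
    _ = _ := by
        rw [sum_comm]
        congr 1 with y
        rw [mul_sum]
        congr 1 with x
        ring

theorem codebook_avg_error_le (hW : ∀ x, IsPmf (W x)) (hPX : IsPmf PX) {Φ : X → Y → ℝ}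
    (hΦ : ∀ x y, 0 ≤ Φ x y ∧ Φ x y ≤ 1) (i : ι) :
    ∑ f : ι → X, (∏ j, PX (f j)) *
        ∑ y, W (f i) y * (1 - Φ (f i) y * ∏ j ∈ univ.erase i, (1 - Φ (f j) y)) ≤
      (1 - ∑ x, ∑ y, Φ x y * (PX x * W x y)) +
        (Fintype.card ι - 1 : ℝ) * ∑ x, ∑ y, Φ x y * (PX x * ∑ x', PX x' * W x' y) := by
  calc _ ≤ ∑ f : ι → X, (∏ j, PX (f j)) * (∑ y, W (f i) y * (1 - Φ (f i) y) +
          ∑ k ∈ univ.erase i, ∑ y, W (f i) y * Φ (f k) y) := by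
        gcongr with f _
        · exact prod_nonneg fun j _ => hPX.1 _
        rw [← sum_comm, ← sum_add_distrib]
        gcongr with y
        rw [← mul_sum, ← mul_add]
        gcongr
        · exact (hW _).1 y
        exact one_sub_mul_prod_one_sub_le _ (hΦ _ y) fun j _ => hΦ _ y
    _ = (1 - ∑ x, ∑ y, Φ x y * (PX x * W x y)) +
          ∑ k ∈ univ.erase i, ∑ x, ∑ y, Φ x y * (PX x * ∑ x', PX x' * W x' y) := by
        simp_rw [mul_add, sum_add_distrib, mul_sum (univ.erase i)]
        rw [codebook_avg_miss_eq (fun x => (hW x).2) hPX.2,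
          sum_comm (s := univ) (t := univ.erase i)]
        congr 1
        refine sum_congr rfl fun k hk => ?_
        exact codebook_avg_confusion_eq hPX.2 Φ (ne_of_mem_erase hk).symm
    _ = _ := by
        rw [sum_const, card_erase_of_mem (mem_univ i), card_univ, nsmul_eq_mul,
          Nat.cast_pred (Fintype.card_pos_iff.2 ⟨i⟩)]

end RandomCoding

theorem random_coding_bound_general {X Y : Type*} [Fintype X] [Fintype Y]
    (W : X → Y → ℝ) (hW : ∀ x, IsPmf (W x))
    (PX : X → ℝ) (hPX : IsPmf PX)
    (m : ℕ) (hm : 1 ≤ m) (ε' : ℝ)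
    (Φ : X → Y → ℝ) (hΦ : ∀ x y, 0 ≤ Φ x y ∧ Φ x y ≤ 1)
    (hcov : 1 - ε' ≤ ∑ x, ∑ y, Φ x y * (PX x * W x y)) :
    ∑ f : Fin m → X, (∏ j : Fin m, PX (f j)) *
        ((1 / m : ℝ) * ∑ i : Fin m, ∑ y, W (f i) y *
          (1 - Φ (f i) y * ∏ j ∈ Finset.univ.erase i, (1 - Φ (f j) y)))
      ≤ (m - 1 : ℝ) * (∑ x, ∑ y, Φ x y * (PX x * (∑ x', PX x' * W x' y))) + ε' := by
  set S := ∑ x, ∑ y, Φ x y * (PX x * (∑ x', PX x' * W x' y))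
  have hmsg (i : Fin m) : ∑ f : Fin m → X, (∏ j, PX (f j)) * ∑ y, W (f i) y *
      (1 - Φ (f i) y * ∏ j ∈ Finset.univ.erase i, (1 - Φ (f j) y)) ≤ (m - 1 : ℝ) * S + ε' := by
    have := codebook_avg_error_le hW hPX hΦ i
    rw [Fintype.card_fin] at this
    linarith
  calc _ = (1 / m : ℝ) * ∑ i : Fin m, ∑ f : Fin m → X, (∏ j, PX (f j)) * ∑ y, W (f i) y *
        (1 - Φ (f i) y * ∏ j ∈ Finset.univ.erase i, (1 - Φ (f j) y)) := by
        simp_rw [Finset.mul_sum]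
        rw [Finset.sum_comm]
        exact Finset.sum_congr rfl fun i _ => Finset.sum_congr rfl fun f _ =>
          Finset.sum_congr rfl fun y _ => by ring
    _ ≤ (1 / m : ℝ) * ∑ _i : Fin m, ((m - 1 : ℝ) * S + ε') := by
        gcongr with i
        exact hmsg i
    _ = (m - 1 : ℝ) * S + ε' := by
        rw [Finset.sum_const, Finset.card_univ, Fintype.card_fin, nsmul_eq_mul]
        field_simp

/-- Random-coding error bound: for a codebook of `m` i.i.d. `P_X`-codewords and the
randomized decoder selecting message `j` with probability `Φ(f(j),y)`, the average
error probability is at most `(m-1)·∑ Φ d(P_X × P_Y) + ε'`. -/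
theorem random_coding_bound {X Y : Type*} [Fintype X] [Fintype Y]
    (W : X → Y → ℝ) (hW : ∀ x, IsPmf (W x))
    (PX : X → ℝ) (hPX : IsPmf PX)
    (m : ℕ) (hm : 1 ≤ m) (ε' : ℝ) (hε' : 0 ≤ ε')
    (Φ : X → Y → ℝ) (hΦ : ∀ x y, 0 ≤ Φ x y ∧ Φ x y ≤ 1)
    (hcov : 1 - ε' ≤ ∑ x, ∑ y, Φ x y * (PX x * W x y)) :
    ∑ f : Fin m → X, (∏ j : Fin m, PX (f j)) *
        ((1 / m : ℝ) * ∑ i : Fin m, ∑ y, W (f i) y *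
          (1 - Φ (f i) y * ∏ j ∈ Finset.univ.erase i, (1 - Φ (f j) y)))
      ≤ (m - 1 : ℝ) * (∑ x, ∑ y, Φ x y * (PX x * (∑ x', PX x' * W x' y))) + ε' :=
  random_coding_bound_general W hW PX hPX m hm ε' Φ hΦ hcov
end

section
/- (Lower bound direction of Lemma 2) Let (P_n) and (Q_n) be sequences of probability measures on measurable spaces (Ω_n, F_n). Suppose a < {P_n}-liminf (1/n) log(dP_n/dQ_n), meaning lim_{n→∞} P_n({ (1/n) log(dP_n/dQ_n) < a }) = 0. Then lim_{δ↓0} liminf_{n→∞} (1/n) D₀^δ(P_n‖Q_n) ≥ a. -/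
open scoped BigOperators Classical

/-!
The indicator of the set `S` where `log₂ (P/Q) ≥ t` (and `P > 0`) is an admissible test once
`P(Sᶜ) ≤ δ`, and on `S` we have `Q ≤ 2^(-t) P`, so `Q(S) ≤ 2^(-t)` and `D₀^δ(P‖Q) ≥ t`.
With `t = n a` this holds for all large `n` by hypothesis, and dividing by `n` gives the bound.
-/

open Filter Finset

theorem coe_le_negLog2_of_le_rpow {s t : ℝ} (hs : 0 ≤ s) (h : s ≤ (2 : ℝ) ^ (-t)) :
    (t : EReal) ≤ negLog2 s := by
  unfold negLog2
  split_ifs with h0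
  · exact le_top
  have hlog : Real.logb 2 s ≤ -t :=
    calc Real.logb 2 s ≤ Real.logb 2 ((2 : ℝ) ^ (-t)) :=
          Real.logb_le_logb_of_le one_lt_two (lt_of_le_of_ne hs (Ne.symm h0)) h
      _ = -t := Real.logb_rpow two_pos (by norm_num)
  exact_mod_cast (by linarith : t ≤ -Real.logb 2 s)

section Divergence

variable {Ω : Type*} [Fintype Ω] {P Q : Ω → ℝ}

theorem negLog2_sum_le_D0smooth {δ : ℝ} (S : Finset Ω) (hS : 1 - δ ≤ ∑ x ∈ S, P x) :
    negLog2 (∑ x ∈ S, Q x) ≤ D0smooth P Q δ := by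
  refine le_sSup ⟨fun x => if x ∈ S then 1 else 0, fun x => ?_, ?_, ?_⟩
  · dsimp only
    split_ifs <;> norm_num
  · simpa only [ite_mul, one_mul, zero_mul, sum_ite_mem, univ_inter] using hS
  · simp only [ite_mul, one_mul, zero_mul, sum_ite_mem, univ_inter]

theorem le_rpow_mul_of_le_logb_div {p q t : ℝ} (hp : 0 < p) (hq : 0 < q)
    (h : t ≤ Real.logb 2 (p / q)) : q ≤ (2 : ℝ) ^ (-t) * p := by
  have hratio : (2 : ℝ) ^ t ≤ p / q :=
    (Real.le_logb_iff_rpow_le one_lt_two (div_pos hp hq)).1 h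
  rw [Real.rpow_neg zero_le_two, inv_mul_eq_div, le_div_iff₀ (by positivity)]
  rw [le_div_iff₀ hq] at hratio
  linarith

theorem le_D0smooth_of_sum_logb_lt_le (hP : IsPmf P) (hQ : ∀ x, 0 ≤ Q x)
    (habs : ∀ x, P x ≠ 0 → Q x ≠ 0) {t δ : ℝ}
    (h : ∑ x ∈ univ.filter (fun x => Real.logb 2 (P x / Q x) < t), P x ≤ δ) :
    (t : EReal) ≤ D0smooth P Q δ := by
  set S := (univ.filter (fun x => ¬ Real.logb 2 (P x / Q x) < t)).filter (fun x => 0 < P x)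
  have hPS : ∑ x ∈ S, P x = ∑ x ∈ univ.filter (fun x => ¬ Real.logb 2 (P x / Q x) < t), P x :=
    sum_filter_of_ne fun x _ hx => lt_of_le_of_ne (hP.1 x) (Ne.symm hx)
  have hQS : ∑ x ∈ S, Q x ≤ (2 : ℝ) ^ (-t) :=
    calc ∑ x ∈ S, Q x ≤ ∑ x ∈ S, (2 : ℝ) ^ (-t) * P x := by
          refine sum_le_sum fun x hx => ?_
          obtain ⟨hx, hpos⟩ := mem_filter.1 hx
          have hlog := (mem_filter.1 hx).2
          exact le_rpow_mul_of_le_logb_div hpos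
            (lt_of_le_of_ne (hQ x) (Ne.symm (habs x hpos.ne'))) (not_lt.1 hlog)
      _ ≤ ∑ x, (2 : ℝ) ^ (-t) * P x :=
          sum_le_sum_of_subset_of_nonneg (subset_univ S) fun x _ _ => by
            have := hP.1 x; positivity
      _ = (2 : ℝ) ^ (-t) := by rw [← mul_sum, hP.2, mul_one]
  have hmass := sum_filter_add_sum_filter_not univ
    (fun x => Real.logb 2 (P x / Q x) < t) P
  rw [hP.2] at hmass
  calc (t : EReal) ≤ negLog2 (∑ x ∈ S, Q x) :=
        coe_le_negLog2_of_le_rpow (sum_nonneg fun x _ => hQ x) hQS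
    _ ≤ D0smooth P Q δ := negLog2_sum_le_D0smooth S (by linarith)

end Divergence

/-- Lower bound direction of Lemma 2: if `(1/n)·log₂(dPₙ/dQₙ) ≥ a` with
`Pₙ`-probability tending to one, then `liminf (1/n)·D₀^δ(Pₙ‖Qₙ) ≥ a` for every
`δ > 0` (hence also in the limit `δ ↓ 0`). -/
theorem liminf_D0smooth_ge {Ω : ℕ → Type*} [∀ n, Fintype (Ω n)]
    (P Q : ∀ n, Ω n → ℝ) (hP : ∀ n, IsPmf (P n)) (hQ : ∀ n, IsPmf (Q n))
    (habs : ∀ n x, P n x ≠ 0 → Q n x ≠ 0)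
    (a : ℝ)
    (ha : Tendsto (fun n : ℕ =>
        ∑ x ∈ Finset.univ.filter
          (fun x => (1 / (n:ℝ)) * Real.logb 2 (P n x / Q n x) < a), P n x)
      atTop (nhds 0)) :
    ∀ δ : ℝ, 0 < δ →
      (a : EReal) ≤ liminf
        (fun n : ℕ => ((1 / (n:ℝ) : ℝ) : EReal) * D0smooth (P n) (Q n) δ) atTop := by
  intro δ hδ
  refine le_liminf_of_le (by isBoundedDefault) ?_
  filter_upwards [ha.eventually (gt_mem_nhds hδ), eventually_gt_atTop 0] with n hn hn0
  have hnpos : (0 : ℝ) < n := by exact_mod_cast hn0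
  have hfilter : univ.filter (fun x => (1 / (n:ℝ)) * Real.logb 2 (P n x / Q n x) < a) =
      univ.filter (fun x => Real.logb 2 (P n x / Q n x) < n * a) :=
    filter_congr fun x _ => by rw [one_div_mul_eq_div, div_lt_iff₀' hnpos]
  have hD : (((n * a : ℝ)) : EReal) ≤ D0smooth (P n) (Q n) δ :=
    le_D0smooth_of_sum_logb_lt_le (hP n) (hQ n).1 (habs n) (hfilter ▸ hn.le)
  calc (a : EReal) = ((1 / (n:ℝ) : ℝ) : EReal) * ((n * a : ℝ) : EReal) := by
        rw [← EReal.coe_mul, one_div_mul_eq_div, mul_div_cancel_left₀ a hnpos.ne']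
    _ ≤ _ := mul_le_mul_of_nonneg_left hD (by exact_mod_cast (one_div_pos.2 hnpos).le)
end

section
/- (Upper bound direction of Lemma 2) Let (P_n) and (Q_n) be sequences of probability measures on (Ω_n, F_n) with P_n ≪ Q_n. Suppose b > {P_n}-liminf (1/n) log(dP_n/dQ_n), i.e., limsup_{n→∞} P_n({ (1/n) log(dP_n/dQ_n) ≤ b }) = c for some c ∈ (0,1]. Then for every δ ∈ (0,c), liminf_{n→∞} (1/n) D₀^δ(P_n‖Q_n) ≤ b; hence lim_{δ↓0} liminf_{n→∞} (1/n) D₀^δ(P_n‖Q_n) ≤ b. -/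
open scoped BigOperators Classical

/-!
Let `Aₙ = {(1/n) log₂(Pₙ/Qₙ) ≤ b}`, on which `Pₙ ≤ 2^{nb} Qₙ`. Along the infinitely many `n`
with `Pₙ(Aₙ) > (c + δ)/2`, every test `Φ` with `∑ Φ Pₙ ≥ 1 - δ` keeps `Pₙ`-mass at least
`η = (c - δ)/2` inside `Aₙ`, hence `∑ Φ Qₙ ≥ 2^{-nb} η` and `D₀^δ(Pₙ‖Qₙ) ≤ nb - log₂ η`.
Dividing by `n`, the constant `log₂ η` disappears in the limit.
-/

open Filter

lemma negLog2_le_of_le {s t : ℝ} (ht : 0 < t) (hts : t ≤ s) :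
    negLog2 s ≤ ((-Real.logb 2 t : ℝ) : EReal) := by
  rw [negLog2, if_neg (ht.trans_le hts).ne', EReal.coe_le_coe_iff, neg_le_neg_iff]
  exact Real.logb_le_logb_of_le one_lt_two ht hts

lemma sum_sub_le_sum_mul_of_one_sub_le {Ω : Type*} [Fintype Ω] {P Φ : Ω → ℝ} {δ : ℝ}
    (hP : IsPmf P) (hΦ : ∀ x, Φ x ≤ 1) (h : 1 - δ ≤ ∑ x, Φ x * P x) (A : Finset Ω) :
    ∑ x ∈ A, P x - δ ≤ ∑ x ∈ A, Φ x * P x := by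
  have hcompl : ∑ x ∈ Aᶜ, Φ x * P x ≤ ∑ x ∈ Aᶜ, P x :=
    Finset.sum_le_sum fun x _ => mul_le_of_le_one_left (hP.1 x) (hΦ x)
  have hsplitΦ := Finset.sum_add_sum_compl A fun x => Φ x * P x
  have hsplitP := Finset.sum_add_sum_compl A P
  linarith [hP.2]

lemma D0smooth_le_logb_sub_logb {Ω : Type*} [Fintype Ω] {P Q : Ω → ℝ} {δ K η : ℝ}
    (hP : IsPmf P) (hQ : ∀ x, 0 ≤ Q x) (A : Finset Ω) (hK : 0 < K) (hη : 0 < η)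
    (hPQ : ∀ x ∈ A, P x ≤ K * Q x) (hmass : η ≤ ∑ x ∈ A, P x - δ) :
    D0smooth P Q δ ≤ ((Real.logb 2 K - Real.logb 2 η : ℝ) : EReal) := by
  refine sSup_le ?_
  rintro _ ⟨Φ, hΦ, hΦP, rfl⟩
  have hΦA : η ≤ ∑ x ∈ A, Φ x * P x :=
    hmass.trans (sum_sub_le_sum_mul_of_one_sub_le hP (fun x => (hΦ x).2) hΦP A)
  have hΦQ : η / K ≤ ∑ x, Φ x * Q x := by
    rw [div_le_iff₀ hK]
    calc η ≤ ∑ x ∈ A, Φ x * P x := hΦA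
      _ ≤ ∑ x ∈ A, Φ x * (K * Q x) :=
          Finset.sum_le_sum fun x hx => mul_le_mul_of_nonneg_left (hPQ x hx) (hΦ x).1
      _ = (∑ x ∈ A, Φ x * Q x) * K := by rw [Finset.sum_mul]; simp only [mul_left_comm, mul_comm]
      _ ≤ (∑ x, Φ x * Q x) * K := by
          refine mul_le_mul_of_nonneg_right ?_ hK.le
          exact Finset.sum_le_sum_of_subset_of_nonneg (Finset.subset_univ A)
            fun x _ _ => mul_nonneg (hΦ x).1 (hQ x)
  calc negLog2 (∑ x, Φ x * Q x) ≤ ((-Real.logb 2 (η / K) : ℝ) : EReal) :=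
        negLog2_le_of_le (div_pos hη hK) hΦQ
    _ = ((Real.logb 2 K - Real.logb 2 η : ℝ) : EReal) := by
        rw [Real.logb_div hη.ne' hK.ne', neg_sub]

lemma le_two_rpow_mul_of_logb_div_le {p q B : ℝ} (hp : 0 ≤ p) (hq : 0 ≤ q)
    (hpq : p ≠ 0 → q ≠ 0) (h : Real.logb 2 (p / q) ≤ B) : p ≤ 2 ^ B * q := by
  rcases hp.eq_or_lt with rfl | hp
  · positivity
  have hq : 0 < q := hq.lt_of_ne (hpq hp.ne').symm
  rw [← div_le_iff₀ hq]
  exact (Real.logb_le_iff_le_rpow one_lt_two (div_pos hp hq)).1 h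

lemma liminf_one_div_mul_le_of_frequently_le {D : ℕ → EReal} {b C : ℝ}
    (h : ∃ᶠ n : ℕ in atTop, D n ≤ ((n * b + C : ℝ) : EReal)) :
    liminf (fun n : ℕ => ((1 / (n:ℝ) : ℝ) : EReal) * D n) atTop ≤ (b : EReal) := by
  refine le_of_forall_gt_imp_ge_of_dense fun y hy => ?_
  obtain ⟨r, hbr, hry⟩ := EReal.exists_between_coe_real hy
  have hbr : b < r := EReal.coe_lt_coe_iff.mp hbr
  have hC : ∀ᶠ n : ℕ in atTop, C / n < r - b :=
    (tendsto_const_div_atTop_nhds_zero_nat C).eventually (eventually_lt_nhds (sub_pos.2 hbr))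
  refine (liminf_le_of_frequently_le' ?_).trans hry.le
  refine (h.and_eventually (hC.and (eventually_gt_atTop 0))).mono ?_
  rintro n ⟨hD, hCn, hn⟩
  have hn : (0:ℝ) < n := Nat.cast_pos.2 hn
  calc ((1 / (n:ℝ) : ℝ) : EReal) * D n ≤ ((1 / (n:ℝ) : ℝ) : EReal) * ((n * b + C : ℝ) : EReal) :=
        mul_le_mul_of_nonneg_left hD (EReal.coe_nonneg.2 (one_div_pos.2 hn).le)
    _ = ((b + C / n : ℝ) : EReal) := by
        rw [← EReal.coe_mul]
        congr 1
        field_simp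
    _ ≤ r := EReal.coe_le_coe_iff.2 (by linarith)

theorem liminf_D0smooth_le_general {Ω : ℕ → Type*} [∀ n, Fintype (Ω n)]
    (P Q : ∀ n, Ω n → ℝ) (hP : ∀ n, IsPmf (P n)) (hQ : ∀ n, IsPmf (Q n))
    (habs : ∀ n x, P n x ≠ 0 → Q n x ≠ 0)
    (b c : ℝ)
    (hb : limsup (fun n : ℕ =>
        ∑ x ∈ Finset.univ.filter
          (fun x => (1 / (n:ℝ)) * Real.logb 2 (P n x / Q n x) ≤ b), P n x)
      atTop = c) :
    ∀ δ : ℝ, 0 < δ → δ < c →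
      liminf (fun n : ℕ => ((1 / (n:ℝ) : ℝ) : EReal) * D0smooth (P n) (Q n) δ) atTop
        ≤ (b : EReal) := by
  intro δ _ hδc
  refine liminf_one_div_mul_le_of_frequently_le (C := -Real.logb 2 ((c - δ) / 2)) ?_
  have hfreq := frequently_lt_of_lt_limsup (b := (c + δ) / 2)
    (isCoboundedUnder_le_of_le atTop fun n => Finset.sum_nonneg fun x _ => (hP n).1 x)
    (by rw [hb]; linarith)
  refine (hfreq.and_eventually (eventually_gt_atTop 0)).mono fun n ⟨hmass, hn⟩ => ?_
  have hn : (0:ℝ) < n := Nat.cast_pos.2 hn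
  have hPQ : ∀ x ∈ Finset.univ.filter
      (fun x => (1 / (n:ℝ)) * Real.logb 2 (P n x / Q n x) ≤ b), P n x ≤ 2 ^ (n * b) * Q n x := by
    intro x hx
    rw [Finset.mem_filter, one_div_mul_eq_div, div_le_iff₀ hn] at hx
    exact le_two_rpow_mul_of_logb_div_le ((hP n).1 x) ((hQ n).1 x) (habs n x)
      (by linarith [hx.2])
  calc D0smooth (P n) (Q n) δ
      ≤ ((Real.logb 2 (2 ^ (n * b)) - Real.logb 2 ((c - δ) / 2) : ℝ) : EReal) :=
        D0smooth_le_logb_sub_logb (hP n) (hQ n).1 _ (by positivity) (by linarith) hPQ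
          (by linarith)
    _ = ((n * b + -Real.logb 2 ((c - δ) / 2) : ℝ) : EReal) := by
        rw [Real.logb_rpow two_pos one_lt_two.ne', sub_eq_add_neg]

/-- Upper bound direction of Lemma 2: if
`limsup Pₙ({(1/n)·log₂(dPₙ/dQₙ) ≤ b}) = c` with `c ∈ (0,1]`, then for every
`δ ∈ (0,c)`, `liminf (1/n)·D₀^δ(Pₙ‖Qₙ) ≤ b`. -/
theorem liminf_D0smooth_le {Ω : ℕ → Type*} [∀ n, Fintype (Ω n)]
    (P Q : ∀ n, Ω n → ℝ) (hP : ∀ n, IsPmf (P n)) (hQ : ∀ n, IsPmf (Q n))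
    (habs : ∀ n x, P n x ≠ 0 → Q n x ≠ 0)
    (b c : ℝ) (hc0 : 0 < c) (hc1 : c ≤ 1)
    (hb : limsup (fun n : ℕ =>
        ∑ x ∈ Finset.univ.filter
          (fun x => (1 / (n:ℝ)) * Real.logb 2 (P n x / Q n x) ≤ b), P n x)
      atTop = c) :
    ∀ δ : ℝ, 0 < δ → δ < c →
      liminf (fun n : ℕ => ((1 / (n:ℝ) : ℝ) : EReal) * D0smooth (P n) (Q n) δ) atTop
        ≤ (b : EReal) :=
  liminf_D0smooth_le_general P Q hP hQ habs b c hb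
end

section
/- (Smooth 0-divergence of i.i.d. products) Let P and Q be probability mass functions on a finite set Ω with P ≪ Q. Then lim_{δ↓0} liminf_{n→∞} (1/n) D₀^δ(P^{×n} ‖ Q^{×n}) = D(P‖Q), where P^{×n}, Q^{×n} are n-fold product distributions and D(P‖Q) = ∑_x P(x) log₂(P(x)/Q(x)) is the relative entropy. -/
/-! Let `D = ∑ P log₂ (P / Q)`. Chebyshev's inequality for the i.i.d. sum of the log-likelihood
ratio `log₂ (P / Q)` shows that the typical set `{v : |∑ₖ log₂ (P / Q) (vₖ) - n D| < n ε}` has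
`P^{×n}`-mass at least `1 - O(1 / n)`, and on it `Q^{×n} = 2^{-∑ₖ log₂ (P / Q) (vₖ)} P^{×n}` lies
between `2^{-n (D + ε)} P^{×n}` and `2^{-n (D - ε)} P^{×n}`. Testing with the indicator of the
typical set gives `D₀^δ ≥ n (D - ε)`; conversely every test of `P^{×n}`-mass at least `1 - δ`
puts mass at least `(1 - δ) / 2` on the typical set, hence has `Q^{×n}`-mass at least
`2^{-n (D + ε)} (1 - δ) / 2`. So for every fixed `δ ∈ (0, 1)` the normalized divergence already
converges to `D`. -/

open scoped BigOperators Classical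

lemma le_negLog2 {s r : ℝ} (hs : 0 ≤ s) (h : s ≤ 2 ^ (-r)) : (r : EReal) ≤ negLog2 s := by
  rcases hs.eq_or_lt with rfl | hs
  · simp [negLog2]
  · rw [negLog2, if_neg hs.ne', EReal.coe_le_coe_iff, le_neg,
      Real.logb_le_iff_le_rpow one_lt_two hs]
    exact h

lemma negLog2_le {s r : ℝ} (h : 2 ^ (-r) ≤ s) : negLog2 s ≤ r := by
  have hs : 0 < s := (Real.rpow_pos_of_pos two_pos _).trans_le h
  rw [negLog2, if_neg hs.ne', EReal.coe_le_coe_iff, neg_le,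
    Real.le_logb_iff_rpow_le one_lt_two hs]
  exact h

section D0smooth

variable {α : Type*} [Fintype α] [DecidableEq α] {P Q : α → ℝ} {A : Finset α} {δ η r : ℝ}

lemma le_D0smooth_of_sum_le (hP1 : ∑ a, P a = 1) (hQ0 : ∀ a, 0 ≤ Q a)
    (hA : ∑ a ∈ Aᶜ, P a ≤ δ) (hQA : ∑ a ∈ A, Q a ≤ 2 ^ (-r)) :
    (r : EReal) ≤ D0smooth P Q δ := by
  set Φ : α → ℝ := fun a => if a ∈ A then 1 else 0
  have hsum (R : α → ℝ) : ∑ a, Φ a * R a = ∑ a ∈ A, R a := by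
    simp only [Φ, ite_mul, one_mul, zero_mul, Finset.sum_ite_mem, Finset.univ_inter]
  have hΦP : 1 - δ ≤ ∑ a, Φ a * P a := by
    rw [hsum, ← hP1, ← Finset.sum_compl_add_sum A]
    linarith
  have hΦQ : (r : EReal) ≤ negLog2 (∑ a, Φ a * Q a) := by
    rw [hsum]
    exact le_negLog2 (Finset.sum_nonneg fun a _ => hQ0 a) hQA
  exact hΦQ.trans (le_sSup ⟨Φ, fun a => by simp only [Φ]; split_ifs <;> norm_num, hΦP, rfl⟩)

lemma D0smooth_le_of_le_apply (hP0 : ∀ a, 0 ≤ P a) (hQ0 : ∀ a, 0 ≤ Q a)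
    (hA : ∑ a ∈ Aᶜ, P a ≤ η) (hηδ : η < 1 - δ) (hQA : ∀ a ∈ A, 2 ^ (-r) * P a ≤ Q a) :
    D0smooth P Q δ ≤ ((r - Real.logb 2 (1 - δ - η) : ℝ) : EReal) := by
  refine sSup_le ?_
  rintro _ ⟨Φ, hΦ, hΦP, rfl⟩
  refine negLog2_le ?_
  have hΦPA : 1 - δ - η ≤ ∑ a ∈ A, Φ a * P a := by
    have hΦPAc : ∑ a ∈ Aᶜ, Φ a * P a ≤ η :=
      (Finset.sum_le_sum fun a _ => mul_le_of_le_one_left (hP0 a) (hΦ a).2).trans hA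
    rw [← Finset.sum_compl_add_sum A] at hΦP
    linarith
  calc (2 : ℝ) ^ (-(r - Real.logb 2 (1 - δ - η))) = 2 ^ (-r) * (1 - δ - η) := by
        rw [neg_sub, sub_eq_add_neg, Real.rpow_add two_pos,
          Real.rpow_logb two_pos (by norm_num) (by linarith), mul_comm]
    _ ≤ 2 ^ (-r) * ∑ a ∈ A, Φ a * P a := by gcongr
    _ = ∑ a ∈ A, Φ a * (2 ^ (-r) * P a) := by
        rw [Finset.mul_sum]; exact Finset.sum_congr rfl fun a _ => by ring
    _ ≤ ∑ a ∈ A, Φ a * Q a :=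
        Finset.sum_le_sum fun a ha => mul_le_mul_of_nonneg_left (hQA a ha) (hΦ a).1
    _ ≤ ∑ a, Φ a * Q a := Finset.sum_le_sum_of_subset_of_nonneg A.subset_univ
        fun a _ _ => mul_nonneg (hΦ a).1 (hQ0 a)

end D0smooth

section ProductMass

variable {Ω : Type*} [Fintype Ω] {P : Ω → ℝ} {n : ℕ}

lemma sum_pi_prod_mul_prod (P : Ω → ℝ) (g : Fin n → Ω → ℝ) :
    ∑ v : Fin n → Ω, (∏ k, P (v k)) * ∏ k, g k (v k) = ∏ k, ∑ x, P x * g k x := by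
  simp_rw [← Finset.prod_mul_distrib]
  exact (Fintype.prod_sum fun k x => P x * g k x).symm

lemma sum_pi_prod_eq_one (hP1 : ∑ x, P x = 1) (n : ℕ) :
    ∑ v : Fin n → Ω, ∏ k, P (v k) = 1 := by
  simp [← Fintype.prod_sum fun (_ : Fin n) => P, hP1]

lemma sum_pi_prod_mul_apply_mul_apply (hP1 : ∑ x, P x = 1) {h : Ω → ℝ}
    (hmean : ∑ x, P x * h x = 0) (i j : Fin n) :
    ∑ v : Fin n → Ω, (∏ k, P (v k)) * (h (v i) * h (v j))
      = if i = j then ∑ x, P x * h x ^ 2 else 0 := by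
  have hcoord (v : Fin n → Ω) : h (v i) * h (v j)
      = ∏ k, (if k = i then h (v k) else 1) * (if k = j then h (v k) else 1) := by
    rw [Finset.prod_mul_distrib]
    simp
  simp_rw [hcoord]
  rw [sum_pi_prod_mul_prod P fun k x => (if k = i then h x else 1) * (if k = j then h x else 1)]
  split_ifs with hij
  · subst hij
    simp [hP1, ← sq]
  · refine Finset.prod_eq_zero (Finset.mem_univ i) ?_
    simp [hij, hmean]

lemma sum_pi_prod_mul_sum_sq (hP1 : ∑ x, P x = 1) {h : Ω → ℝ} (hmean : ∑ x, P x * h x = 0) :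
    ∑ v : Fin n → Ω, (∏ k, P (v k)) * (∑ k, h (v k)) ^ 2 = n * ∑ x, P x * h x ^ 2 := by
  have hexpand (v : Fin n → Ω) : (∏ k, P (v k)) * (∑ k, h (v k)) ^ 2
      = ∑ i, ∑ j, (∏ k, P (v k)) * (h (v i) * h (v j)) := by
    rw [sq, Finset.sum_mul_sum, Finset.mul_sum]
    simp_rw [Finset.mul_sum]
  simp_rw [hexpand]
  rw [Finset.sum_comm]
  simp_rw [Finset.sum_comm (s := (Finset.univ : Finset (Fin n → Ω))),
    sum_pi_prod_mul_apply_mul_apply hP1 hmean]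
  simp

lemma sum_pi_prod_mul_sum_sub_sq (hP1 : ∑ x, P x = 1) (f : Ω → ℝ) :
    ∑ v : Fin n → Ω, (∏ k, P (v k)) * (∑ k, f (v k) - n * ∑ x, P x * f x) ^ 2
      = n * ∑ x, P x * (f x - ∑ y, P y * f y) ^ 2 := by
  have hmean : ∑ x, P x * (f x - ∑ y, P y * f y) = 0 := by
    simp only [mul_sub, Finset.sum_sub_distrib, ← Finset.sum_mul, hP1, one_mul, sub_self]
  rw [← sum_pi_prod_mul_sum_sq hP1 hmean]
  simp [Finset.sum_sub_distrib]

variable (P) in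
/-- Sequences of `P`-probability zero are excluded: on them `f` may carry junk values such as
`logb 2 (0 / Q x) = 0`. -/
noncomputable def typicalSet (f : Ω → ℝ) (n : ℕ) (ε : ℝ) : Finset (Fin n → Ω) :=
  {v | ∏ k, P (v k) ≠ 0 ∧ |∑ k, f (v k) - n * ∑ x, P x * f x| < n * ε}

lemma sum_compl_typicalSet_le (hP0 : ∀ x, 0 ≤ P x) (hP1 : ∑ x, P x = 1) (f : Ω → ℝ)
    (hn : 0 < n) {ε : ℝ} (hε : 0 < ε) :
    ∑ v ∈ (typicalSet P f n ε)ᶜ, ∏ k, P (v k)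
      ≤ (∑ x, P x * (f x - ∑ y, P y * f y) ^ 2) / (ε ^ 2 * n) := by
  set S : (Fin n → Ω) → ℝ := fun v => ∑ k, f (v k) - n * ∑ x, P x * f x
  have hPn (v : Fin n → Ω) : 0 ≤ ∏ k, P (v k) := Finset.prod_nonneg fun k _ => hP0 (v k)
  have hdev : ∀ v ∈ (typicalSet P f n ε)ᶜ,
      (∏ k, P (v k)) * (n * ε) ^ 2 ≤ (∏ k, P (v k)) * S v ^ 2 := by
    intro v hv
    simp only [typicalSet, Finset.mem_compl, Finset.mem_filter, Finset.mem_univ, true_and,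
      not_and, not_lt] at hv
    by_cases h0 : ∏ k, P (v k) = 0
    · simp [h0]
    · rw [← sq_abs (S v)]
      gcongr
      exacts [hPn v, hv h0]
  rw [le_div_iff₀ (by positivity)]
  refine le_of_mul_le_mul_left ?_ (Nat.cast_pos.2 hn : (0 : ℝ) < n)
  calc n * ((∑ v ∈ (typicalSet P f n ε)ᶜ, ∏ k, P (v k)) * (ε ^ 2 * n))
      = ∑ v ∈ (typicalSet P f n ε)ᶜ, (∏ k, P (v k)) * (n * ε) ^ 2 := by
        rw [Finset.sum_mul, Finset.mul_sum]
        exact Finset.sum_congr rfl fun v _ => by ring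
    _ ≤ ∑ v ∈ (typicalSet P f n ε)ᶜ, (∏ k, P (v k)) * S v ^ 2 := Finset.sum_le_sum hdev
    _ ≤ ∑ v, (∏ k, P (v k)) * S v ^ 2 :=
        Finset.sum_le_sum_of_subset_of_nonneg (Finset.subset_univ _)
          fun v _ _ => mul_nonneg (hPn v) (sq_nonneg _)
    _ = n * ∑ x, P x * (f x - ∑ y, P y * f y) ^ 2 := sum_pi_prod_mul_sum_sub_sq hP1 f

end ProductMass

section IidProducts

variable {Ω : Type*} {P Q : Ω → ℝ} {n : ℕ}

variable (P Q) in
noncomputable def llr (x : Ω) : ℝ := Real.logb 2 (P x / Q x)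

lemma prod_eq_rpow_neg_sum_llr_mul_prod (hP0 : ∀ x, 0 ≤ P x) (hQ0 : ∀ x, 0 ≤ Q x)
    (habs : ∀ x, P x ≠ 0 → Q x ≠ 0) {v : Fin n → Ω} (hv : ∏ k, P (v k) ≠ 0) :
    ∏ k, Q (v k) = 2 ^ (-∑ k, llr P Q (v k)) * ∏ k, P (v k) := by
  have hcoord (k : Fin n) : Q (v k) = 2 ^ (-llr P Q (v k)) * P (v k) := by
    have hPk : P (v k) ≠ 0 := Finset.prod_ne_zero_iff.1 hv k (Finset.mem_univ k)
    have hpos : 0 < P (v k) / Q (v k) :=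
      div_pos ((hP0 _).lt_of_ne' hPk) ((hQ0 _).lt_of_ne' (habs _ hPk))
    rw [llr, Real.rpow_neg zero_le_two, Real.rpow_logb two_pos (by norm_num) hpos, inv_div,
      div_mul_cancel₀ _ hPk]
  rw [← Finset.sum_neg_distrib, Real.rpow_sum_of_pos two_pos, ← Finset.prod_mul_distrib]
  exact Finset.prod_congr rfl fun k _ => hcoord k

variable [Fintype Ω]

lemma prod_le_rpow_mul_prod_of_mem_typicalSet (hP0 : ∀ x, 0 ≤ P x) (hQ0 : ∀ x, 0 ≤ Q x)
    (habs : ∀ x, P x ≠ 0 → Q x ≠ 0) {ε : ℝ} {v : Fin n → Ω}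
    (hv : v ∈ typicalSet P (llr P Q) n ε) :
    ∏ k, Q (v k) ≤ 2 ^ (-(n * (∑ x, P x * llr P Q x - ε))) * ∏ k, P (v k) := by
  simp only [typicalSet, Finset.mem_filter, Finset.mem_univ, true_and, abs_sub_lt_iff] at hv
  rw [prod_eq_rpow_neg_sum_llr_mul_prod hP0 hQ0 habs hv.1]
  gcongr
  · exact Finset.prod_nonneg fun k _ => hP0 (v k)
  · exact one_le_two
  · linarith [hv.2.2]

lemma rpow_mul_prod_le_prod_of_mem_typicalSet (hP0 : ∀ x, 0 ≤ P x) (hQ0 : ∀ x, 0 ≤ Q x)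
    (habs : ∀ x, P x ≠ 0 → Q x ≠ 0) {ε : ℝ} {v : Fin n → Ω}
    (hv : v ∈ typicalSet P (llr P Q) n ε) :
    2 ^ (-(n * (∑ x, P x * llr P Q x + ε))) * ∏ k, P (v k) ≤ ∏ k, Q (v k) := by
  simp only [typicalSet, Finset.mem_filter, Finset.mem_univ, true_and, abs_sub_lt_iff] at hv
  rw [prod_eq_rpow_neg_sum_llr_mul_prod hP0 hQ0 habs hv.1]
  gcongr
  · exact Finset.prod_nonneg fun k _ => hP0 (v k)
  · exact one_le_two
  · linarith [hv.2.1]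

lemma natCast_mul_sub_le_D0smooth_pi (hP : IsPmf P) (hQ : IsPmf Q)
    (habs : ∀ x, P x ≠ 0 → Q x ≠ 0) (hn : 0 < n) {ε δ : ℝ} (hε : 0 < ε)
    (hδ : (∑ x, P x * (llr P Q x - ∑ y, P y * llr P Q y) ^ 2) / (ε ^ 2 * n) ≤ δ) :
    ((n * (∑ x, P x * llr P Q x - ε) : ℝ) : EReal)
      ≤ D0smooth (fun v : Fin n → Ω => ∏ k, P (v k)) (fun v => ∏ k, Q (v k)) δ := by
  set T := typicalSet P (llr P Q) n ε
  refine le_D0smooth_of_sum_le (A := T) (sum_pi_prod_eq_one hP.2 n)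
    (fun v => Finset.prod_nonneg fun k _ => hQ.1 (v k))
    ((sum_compl_typicalSet_le hP.1 hP.2 _ hn hε).trans hδ) ?_
  calc ∑ v ∈ T, ∏ k, Q (v k)
      ≤ ∑ v ∈ T, 2 ^ (-(n * (∑ x, P x * llr P Q x - ε))) * ∏ k, P (v k) :=
        Finset.sum_le_sum fun v hv => prod_le_rpow_mul_prod_of_mem_typicalSet hP.1 hQ.1 habs hv
    _ ≤ 2 ^ (-(n * (∑ x, P x * llr P Q x - ε))) * ∑ v : Fin n → Ω, ∏ k, P (v k) := by
        rw [← Finset.mul_sum]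
        gcongr
        exacts [fun v _ _ => Finset.prod_nonneg fun k _ => hP.1 (v k), T.subset_univ]
    _ = 2 ^ (-(n * (∑ x, P x * llr P Q x - ε))) := by rw [sum_pi_prod_eq_one hP.2 n, mul_one]

lemma D0smooth_pi_le_natCast_mul_add (hP : IsPmf P) (hQ : IsPmf Q)
    (habs : ∀ x, P x ≠ 0 → Q x ≠ 0) (hn : 0 < n) {ε δ η : ℝ} (hε : 0 < ε)
    (hη : (∑ x, P x * (llr P Q x - ∑ y, P y * llr P Q y) ^ 2) / (ε ^ 2 * n) ≤ η)
    (hηδ : η < 1 - δ) :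
    D0smooth (fun v : Fin n → Ω => ∏ k, P (v k)) (fun v => ∏ k, Q (v k)) δ
      ≤ ((n * (∑ x, P x * llr P Q x + ε) - Real.logb 2 (1 - δ - η) : ℝ) : EReal) :=
  D0smooth_le_of_le_apply (fun v => Finset.prod_nonneg fun k _ => hP.1 (v k))
    (fun v => Finset.prod_nonneg fun k _ => hQ.1 (v k))
    ((sum_compl_typicalSet_le hP.1 hP.2 _ hn hε).trans hη) hηδ
    fun _ hv => rpow_mul_prod_le_prod_of_mem_typicalSet hP.1 hQ.1 habs hv

end IidProducts

open Filter Topology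

lemma EReal.tendsto_coe_of_eventually_le {ι : Type*} {l : Filter ι} {a : ι → EReal} {m : ℝ}
    (hlow : ∀ ε > 0, ∀ᶠ i in l, ((m - ε : ℝ) : EReal) ≤ a i)
    (hup : ∀ ε > 0, ∀ᶠ i in l, a i ≤ ((m + ε : ℝ) : EReal)) :
    Tendsto a l (𝓝 (m : EReal)) := by
  refine tendsto_order.2 ⟨fun b hb => ?_, fun b hb => ?_⟩
  · obtain ⟨r, hbr, hrm⟩ := EReal.exists_between_coe_real hb
    filter_upwards [hlow (m - r) (by simpa using hrm)] with i hi
    exact hbr.trans_le (by simpa using hi)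
  · obtain ⟨r, hmr, hrb⟩ := EReal.exists_between_coe_real hb
    filter_upwards [hup (r - m) (by simpa using hmr)] with i hi
    exact (by simpa using hi : a i ≤ r).trans_lt hrb

lemma tendsto_inv_mul_D0smooth_pi {Ω : Type*} [Fintype Ω] {P Q : Ω → ℝ} (hP : IsPmf P)
    (hQ : IsPmf Q) (habs : ∀ x, P x ≠ 0 → Q x ≠ 0) {δ : ℝ} (hδ0 : 0 < δ) (hδ1 : δ < 1) :
    Tendsto (fun n : ℕ => ((1 / (n : ℝ) : ℝ) : EReal) *
        D0smooth (fun v : Fin n → Ω => ∏ k, P (v k)) (fun v => ∏ k, Q (v k)) δ)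
      atTop (𝓝 ((∑ x, P x * llr P Q x : ℝ) : EReal)) := by
  set μ := ∑ x, P x * llr P Q x
  set σ2 := ∑ x, P x * (llr P Q x - μ) ^ 2
  have hsmall (C : ℝ) {t : ℝ} (ht : 0 < t) : ∀ᶠ n : ℕ in atTop, C / n ≤ t :=
    (tendsto_const_div_atTop_nhds_zero_nat C).eventually (eventually_le_nhds ht)
  have hscale {n : ℕ} (hn : 0 < n) (x : ℝ) :
      ((1 / (n : ℝ) : ℝ) : EReal) * ((n * x : ℝ) : EReal) = x := by
    rw [← EReal.coe_mul, one_div, inv_mul_cancel_left₀ (by positivity)]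
  refine EReal.tendsto_coe_of_eventually_le (fun ε hε => ?_) (fun ε hε => ?_)
  · filter_upwards [eventually_gt_atTop 0, hsmall (σ2 / ε ^ 2) hδ0] with n hn hδ
    rw [div_div] at hδ
    rw [← hscale hn (μ - ε)]
    gcongr
    exact natCast_mul_sub_le_D0smooth_pi hP hQ habs hn hε hδ
  · set c := -Real.logb 2 (1 - δ - (1 - δ) / 2)
    have hη0 : 0 < (1 - δ) / 2 := by linarith
    filter_upwards [eventually_gt_atTop 0, hsmall (σ2 / (ε / 2) ^ 2) hη0, hsmall c (half_pos hε)]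
      with n hn hη hc
    rw [div_div] at hη
    have hD := D0smooth_pi_le_natCast_mul_add hP hQ habs hn (δ := δ) (half_pos hε) hη (by linarith)
    calc _ ≤ ((1 / (n : ℝ) : ℝ) : EReal) * ((n * (μ + ε / 2 + c / n) : ℝ) : EReal) := by
          gcongr
          convert hD using 3
          simp only [μ, c]
          field_simp
          ring
      _ ≤ ((μ + ε : ℝ) : EReal) := by
          rw [hscale hn, EReal.coe_le_coe_iff]
          linarith

/-- For i.i.d. products, `lim_{δ↓0} liminf_n (1/n)·D₀^δ(P^{×n}‖Q^{×n}) = D(P‖Q)`. -/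
theorem D0smooth_iid_limit {Ω : Type*} [Fintype Ω]
    (P Q : Ω → ℝ) (hP : IsPmf P) (hQ : IsPmf Q)
    (habs : ∀ x, P x ≠ 0 → Q x ≠ 0) :
    Tendsto (fun δ : ℝ =>
        liminf (fun n : ℕ => ((1 / (n:ℝ) : ℝ) : EReal) *
          D0smooth (fun v : Fin n → Ω => ∏ k, P (v k))
            (fun v : Fin n → Ω => ∏ k, Q (v k)) δ) atTop)
      (nhdsWithin 0 (Set.Ioi 0))
      (nhds ((∑ x, P x * Real.logb 2 (P x / Q x) : ℝ) : EReal)) := by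
  refine tendsto_const_nhds.congr' ?_
  filter_upwards [Ioo_mem_nhdsGT (zero_lt_one' ℝ)] with δ hδ
  exact ((tendsto_inv_mul_D0smooth_pi hP hQ habs hδ.1 hδ.2).liminf_eq).symm
end

section
/- (Non-smooth converse, δ = 0 case) For any (m,0)-code over a channel P_{Y|X} with finite alphabets (zero average error probability), log₂ m ≤ sup_{P_X} D₀(P_{XY} ‖ P_X × P_Y), where D₀ is Rényi's divergence of order 0. -/
open scoped BigOperators Classical

/-!
Take `P_X` uniform on the `m` codewords; they are distinct, since each reaches some output, which
then decodes to it alone. With zero error an output `y` can only come from the codeword `f (g y)`,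
so the `P_X`-mass of the inputs compatible with `y` is at most `1/m`. Averaging over `P_Y` gives
`∑_{P_{XY} > 0} P_X P_Y ≤ 1/m`, that is `D₀(P_{XY} ‖ P_X × P_Y) ≥ log₂ m`.
-/

open Finset

section

variable {X Y Ω : Type*} [Fintype Y]

theorem logb_le_negLog2 {s c : ℝ} (hs : 0 ≤ s) (h : s ≤ c⁻¹) :
    (Real.logb 2 c : EReal) ≤ negLog2 s := by
  unfold negLog2
  split_ifs with hs0
  · exact le_top
  · have hlog : Real.logb 2 s ≤ Real.logb 2 c⁻¹ :=
      Real.logb_le_logb_of_le one_lt_two (lt_of_le_of_ne hs (Ne.symm hs0)) h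
    rw [Real.logb_inv] at hlog
    exact_mod_cast (le_neg.mpr hlog)

theorem IsPmf.output [Fintype X] {P : X → ℝ} {W : X → Y → ℝ} (hP : IsPmf P)
    (hW : ∀ x, IsPmf (W x)) :
    IsPmf (fun y => ∑ x, P x * W x y) := by
  refine ⟨fun y => sum_nonneg fun x _ => mul_nonneg (hP.1 x) ((hW x).1 y), ?_⟩
  rw [sum_comm]
  simp only [← mul_sum, (hW _).2, mul_one, hP.2]

theorem sum_prod_on_joint_support_le [Fintype X] {P : X → ℝ} {W : X → Y → ℝ} (hP : IsPmf P)
    (hW : ∀ x, IsPmf (W x)) {c : ℝ}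
    (hc : ∀ y, ∑ x ∈ univ.filter (fun x => 0 < P x * W x y), P x ≤ c) :
    ∑ q ∈ univ.filter (fun q : X × Y => 0 < P q.1 * W q.1 q.2),
        P q.1 * ∑ x, P x * W x q.2 ≤ c := by
  have hPY := hP.output hW
  calc ∑ q ∈ univ.filter (fun q : X × Y => 0 < P q.1 * W q.1 q.2), P q.1 * ∑ x, P x * W x q.2
      = ∑ y, (∑ x ∈ univ.filter (fun x => 0 < P x * W x y), P x) * ∑ x, P x * W x y := by
        rw [sum_filter, Fintype.sum_prod_type, sum_comm]
        simp only [sum_filter, sum_mul, ite_mul, zero_mul]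
    _ ≤ ∑ y, c * ∑ x, P x * W x y :=
        sum_le_sum fun y _ => mul_le_mul_of_nonneg_right (hc y) (hPY.1 y)
    _ = c := by rw [← mul_sum, hPY.2, mul_one]

noncomputable def uniformOn (s : Finset Ω) (x : Ω) : ℝ := if x ∈ s then (#s : ℝ)⁻¹ else 0

theorem uniformOn_nonneg (s : Finset Ω) (x : Ω) : 0 ≤ uniformOn s x := by
  unfold uniformOn; split_ifs <;> positivity

theorem isPmf_uniformOn [Fintype Ω] {s : Finset Ω} (hs : s.Nonempty) : IsPmf (uniformOn s) := by
  refine ⟨uniformOn_nonneg s, ?_⟩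
  simp only [uniformOn, sum_ite_mem, univ_inter, sum_const, nsmul_eq_mul]
  exact mul_inv_cancel₀ (by exact_mod_cast hs.card_pos.ne')

def IsZeroErrorCode {m : ℕ} (W : X → Y → ℝ) (f : Fin m → X) (g : Y → Fin m) : Prop :=
  ∀ i : Fin m, ∑ y ∈ univ.filter (fun y => g y ≠ i), W (f i) y = 0

namespace IsZeroErrorCode

variable {W : X → Y → ℝ} {m : ℕ} {f : Fin m → X} {g : Y → Fin m}

theorem decode_eq (hcode : IsZeroErrorCode W f g) (hW : ∀ x y, 0 ≤ W x y) {i : Fin m} {y : Y}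
    (hy : 0 < W (f i) y) : g y = i := by
  by_contra hne
  exact hy.ne' <|
    (sum_eq_zero_iff_of_nonneg fun z _ => hW (f i) z).mp (hcode i) y (by simpa using hne)

theorem injective [Fintype X] (hcode : IsZeroErrorCode W f g) (hW : ∀ x, IsPmf (W x)) :
    Function.Injective f := by
  intro i j hij
  obtain ⟨y, hy⟩ : ∃ y, 0 < W (f i) y := by
    by_contra! h
    have hsum : ∑ y, W (f i) y = 0 := sum_eq_zero fun y _ => le_antisymm (h y) ((hW _).1 y)
    simp [(hW (f i)).2] at hsum
  have hWnn x y := (hW x).1 y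
  calc i = g y := (hcode.decode_eq hWnn hy).symm
    _ = j := hcode.decode_eq hWnn (hij ▸ hy)

theorem sum_uniformOn_filter_pos_le [Fintype X] (hcode : IsZeroErrorCode W f g)
    (hW : ∀ x, IsPmf (W x)) (y : Y) :
    ∑ x ∈ univ.filter (fun x => 0 < uniformOn (univ.image f) x * W x y),
        uniformOn (univ.image f) x ≤ (m : ℝ)⁻¹ := by
  have hsub : univ.filter (fun x => 0 < uniformOn (univ.image f) x * W x y) ⊆ {f (g y)} := by
    intro x hx
    obtain ⟨hux, hWx⟩ := (pos_and_pos_or_neg_and_neg_of_mul_pos (mem_filter.mp hx).2).resolve_right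
      fun h => (uniformOn_nonneg _ x).not_gt h.1
    have hxf : x ∈ univ.image f := by
      by_contra hxf
      simp [uniformOn, hxf] at hux
    obtain ⟨i, -, rfl⟩ := mem_image.mp hxf
    rw [hcode.decode_eq (fun x y => (hW x).1 y) hWx, mem_singleton]
  calc _ ≤ ∑ x ∈ {f (g y)}, uniformOn (univ.image f) x :=
        sum_le_sum_of_subset_of_nonneg hsub fun x _ _ => uniformOn_nonneg _ x
    _ = (m : ℝ)⁻¹ := by
        rw [sum_singleton, uniformOn, if_pos (mem_image_of_mem f (mem_univ _)),
          card_image_of_injective _ (hcode.injective hW), card_univ, Fintype.card_fin]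

end IsZeroErrorCode

end

/-- Zero-error converse: any `(m,0)`-code satisfies
`log₂ m ≤ sup_{P_X} D₀(P_{XY} ‖ P_X × P_Y)`. -/
theorem zero_error_converse {X Y : Type*} [Fintype X] [Fintype Y]
    (W : X → Y → ℝ) (hW : ∀ x, IsPmf (W x))
    (m : ℕ) (hm : 1 ≤ m) (f : Fin m → X) (g : Y → Fin m)
    (hcode : ∀ i : Fin m,
        ∑ y ∈ Finset.univ.filter (fun y => g y ≠ i), W (f i) y = 0) :
    (Real.logb 2 m : EReal)
      ≤ ⨆ PX : { p : X → ℝ // IsPmf p },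
          D0 (fun q : X × Y => PX.1 q.1 * W q.1 q.2)
            (fun q : X × Y => PX.1 q.1 * ∑ x, PX.1 x * W x q.2) := by
  have hcodewords : (univ.image f).Nonempty := univ.image_nonempty.mpr ⟨⟨0, hm⟩, mem_univ _⟩
  have hPX := isPmf_uniformOn hcodewords
  refine le_iSup_of_le ⟨_, hPX⟩ (logb_le_negLog2 ?_ ?_)
  · exact sum_nonneg fun q _ => mul_nonneg (hPX.1 _) ((hPX.output hW).1 _)
  · exact sum_prod_on_joint_support_le hPX hW
      (IsZeroErrorCode.sum_uniformOn_filter_pos_le hcode hW)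
end

section
/- (Monotonicity under composition with deterministic maps) Let P, Q be probability mass functions on a finite set Ω and h : Ω → Ω' a function to a finite set Ω'. Then for all δ ≥ 0, D₀^δ(P‖Q) ≥ D₀^δ(h_*P ‖ h_*Q), where h_*P denotes the pushforward distribution. -/
open scoped BigOperators Classical

/-! A test `Φ` on `Ω'` pulls back to the test `Φ ∘ h` on `Ω` with the same acceptance
probabilities, so every value in the supremum for `h_*P, h_*Q` also occurs in the one for `P, Q`. -/

open Finset

theorem sum_mul_sum_fiber_eq_sum_comp_mul {Ω Ω' R : Type*} [Fintype Ω] [Fintype Ω']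
    [NonUnitalNonAssocSemiring R] (h : Ω → Ω') (Φ : Ω' → R) (f : Ω → R) :
    ∑ ω', Φ ω' * ∑ ω ∈ univ.filter (fun ω => h ω = ω'), f ω = ∑ ω, Φ (h ω) * f ω := by
  rw [← sum_fiberwise univ h (fun ω => Φ (h ω) * f ω)]
  refine sum_congr rfl fun ω' _ => ?_
  rw [mul_sum]
  exact sum_congr rfl fun ω hω => by rw [(mem_filter.1 hω).2]

theorem D0smooth_pushforward_le_general {Ω Ω' : Type*} [Fintype Ω] [Fintype Ω']
    (P Q : Ω → ℝ)
    (h : Ω → Ω') (δ : ℝ) :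
    D0smooth (fun ω' => ∑ ω ∈ Finset.univ.filter (fun ω => h ω = ω'), P ω)
        (fun ω' => ∑ ω ∈ Finset.univ.filter (fun ω => h ω = ω'), Q ω) δ
      ≤ D0smooth P Q δ := by
  refine sSup_le_sSup ?_
  rintro r ⟨Φ, hΦ, hacc, rfl⟩
  simp only [sum_mul_sum_fiber_eq_sum_comp_mul] at hacc ⊢
  exact ⟨Φ ∘ h, fun ω => hΦ (h ω), hacc, rfl⟩

/-- Monotonicity of `D₀^δ` under deterministic pushforward:
`D₀^δ(h_*P ‖ h_*Q) ≤ D₀^δ(P‖Q)`. -/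
theorem D0smooth_pushforward_le {Ω Ω' : Type*} [Fintype Ω] [Fintype Ω']
    (P Q : Ω → ℝ) (hP : IsPmf P) (hQ : IsPmf Q)
    (h : Ω → Ω') (δ : ℝ) (hδ : 0 ≤ δ) :
    D0smooth (fun ω' => ∑ ω ∈ Finset.univ.filter (fun ω => h ω = ω'), P ω)
        (fun ω' => ∑ ω ∈ Finset.univ.filter (fun ω => h ω = ω'), Q ω) δ
      ≤ D0smooth P Q δ :=
  D0smooth_pushforward_le_general P Q h δ
end

section
/- (Capacity lower bound from achievability) Let a channel be given by kernels P_{Y^n|X^n} from X^n to Y^n for each n, with X, Y finite. If R < lim_{ε↓0} liminf_{n→∞} (1/n) sup_{P_{X^n}} D₀^ε(P_{X^nY^n} ‖ P_{X^n} × P_{Y^n}), then for every sufficiently large n there exist (n, M_n, ε_n)-codes with (1/n) log₂ M_n ≥ R and ε_n → 0; hence the channel capacity C satisfies C ≥ lim_{ε↓0} liminf_{n→∞} (1/n) sup_{P_{X^n}} D₀^ε(P_{X^nY^n} ‖ P_{X^n} × P_{Y^n}). -/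
open scoped BigOperators Classical

open Filter

/-- `sup_{P_X} D₀^ε(P_{XY} ‖ P_X × P_Y)` for a channel `W` from `A` to `B`. -/
noncomputable def supD0 {A B : Type*} [Fintype A] [Fintype B]
    (W : A → B → ℝ) (ε : ℝ) : EReal :=
  ⨆ PX : { p : A → ℝ // IsPmf p },
    D0smooth (fun q : A × B => PX.1 q.1 * W q.1 q.2)
      (fun q : A × B => PX.1 q.1 * ∑ a, PX.1 a * W a q.2) ε

/-- Existence of an `(M,ε)`-code (average error probability at most `ε`)
for the channel `W` from `A` to `B`. -/
def IsCode {A B : Type*} [Fintype A] [Fintype B] (W : A → B → ℝ) (M : ℕ) (ε : ℝ) : Prop :=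
  ∃ (f : Fin M → A) (g : B → Fin M),
    (1 / M : ℝ) * ∑ i : Fin M,
      ∑ y ∈ Finset.univ.filter (fun y => g y ≠ i), W (f i) y ≤ ε


/-!
Random coding with a threshold decoder. Fix an input distribution `P` and a test `Φ` with
`∑ Φ P_{XY} ≥ 1 - δ` and `∑ Φ (P_X × P_Y) ≤ 2^{-r}`, and round `Φ` at `1/2` to a test set `T`.
Draw `M` codewords independently from `P` and decode a received word to any message whose
codeword passes `T` with it. The expected error of a message is at most
`P_{XY}(Tᶜ) + (M - 1) (P_X × P_Y)(T) ≤ 2δ + 2M 2^{-r}` by Markov's inequality, so some codebook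
does at least as well. For `R < R' < liminf` take `r = nR'` and `M = ⌈2^{nR}⌉`: the second
term decays like `2^{-n(R' - R)}`, and a diagonal choice of `δ → 0` makes the error vanish.
-/

open Finset

section Codebook

variable {ι A : Type*} [Fintype ι] [DecidableEq ι] [Fintype A] {P : A → ℝ}

lemma sum_pi_prod_mul_prod_s17 (hP : ∑ a, P a = 1) (s : Finset ι) (f : ι → A → ℝ) :
    ∑ c : ι → A, (∏ k, P (c k)) * ∏ k ∈ s, f k (c k) = ∏ k ∈ s, ∑ a, P a * f k a := by
  calc ∑ c : ι → A, (∏ k, P (c k)) * ∏ k ∈ s, f k (c k)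
      = ∑ c : ι → A, ∏ k, P (c k) * (if k ∈ s then f k (c k) else 1) := by
        simp only [prod_mul_distrib, prod_ite_mem_eq]
    _ = ∏ k, ∑ a, P a * (if k ∈ s then f k a else 1) :=
        (Fintype.prod_sum fun k a => P a * (if k ∈ s then f k a else 1)).symm
    _ = ∏ k ∈ s, ∑ a, P a * f k a := by
        simp [mul_ite, hP]

lemma sum_pi_prod_mul_apply (hP : ∑ a, P a = 1) (i : ι) (h : A → ℝ) :
    ∑ c : ι → A, (∏ k, P (c k)) * h (c i) = ∑ a, P a * h a := by
  simpa using sum_pi_prod_mul_prod_s17 hP {i} fun _ => h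

lemma sum_pi_prod_mul_apply_mul_apply_s17 (hP : ∑ a, P a = 1) {i j : ι} (hij : i ≠ j)
    (h₁ h₂ : A → ℝ) :
    ∑ c : ι → A, (∏ k, P (c k)) * (h₁ (c i) * h₂ (c j)) =
      (∑ a, P a * h₁ a) * ∑ a, P a * h₂ a := by
  simpa [prod_pair hij, hij.symm] using
    sum_pi_prod_mul_prod_s17 hP {i, j} fun k => if k = i then h₁ else h₂

end Codebook

lemma exists_le_of_sum_mul_le {ι : Type*} [Fintype ι] {w f : ι → ℝ} (hw₀ : ∀ i, 0 ≤ w i)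
    (hw₁ : ∑ i, w i = 1) {t : ℝ} (h : ∑ i, w i * f i ≤ t) : ∃ i, f i ≤ t := by
  obtain ⟨i, -, hi⟩ := (concaveOn_id convex_univ).exists_le_of_centerMass (t := univ)
    (fun i _ => hw₀ i) (by simp [hw₁]) (fun i _ => Set.mem_univ (f i))
  exact ⟨i, hi.trans (by simpa [centerMass_eq_of_sum_1 _ _ hw₁] using h)⟩

lemma sum_le_two_mul_sum_mul {ι : Type*} [Fintype ι] {s : Finset ι} {φ μ : ι → ℝ}
    (hφ : ∀ i, 0 ≤ φ i) (hs : ∀ i ∈ s, 1 / 2 ≤ φ i) (hμ : ∀ i, 0 ≤ μ i) :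
    ∑ i ∈ s, μ i ≤ 2 * ∑ i, φ i * μ i := by
  rw [mul_sum]
  calc ∑ i ∈ s, μ i ≤ ∑ i ∈ s, 2 * (φ i * μ i) :=
        sum_le_sum fun i hi => by nlinarith [hs i hi, hμ i]
    _ ≤ ∑ i, 2 * (φ i * μ i) :=
        sum_le_sum_of_subset_of_nonneg (subset_univ s) fun i _ _ =>
          mul_nonneg zero_le_two (mul_nonneg (hφ i) (hμ i))

lemma le_two_rpow_neg_of_coe_lt_negLog2 {q r : ℝ} (hq : 0 ≤ q) (h : (r : EReal) < negLog2 q) :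
    q ≤ 2 ^ (-r) := by
  rw [negLog2] at h
  split_ifs at h with hq₀
  · rw [hq₀]
    positivity
  · have hlt : Real.logb 2 q < -r := by linarith [EReal.coe_lt_coe_iff.1 h]
    exact ((Real.logb_lt_iff_lt_rpow one_lt_two (hq.lt_of_ne' hq₀)).1 hlt).le

lemma EReal.coe_mul_lt_of_lt_one_div_mul {x a : ℝ} {s : EReal} (hx : 0 < x)
    (h : (a : EReal) < ((1 / x : ℝ) : EReal) * s) : ((x * a : ℝ) : EReal) < s := by
  rw [one_div, EReal.coe_inv, ← EReal.div_eq_inv_mul,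
    EReal.lt_div_iff (EReal.coe_pos.2 hx) (EReal.coe_ne_top x)] at h
  rwa [mul_comm, EReal.coe_mul]

lemma le_one_div_mul_logb_ceil_rpow (R : ℝ) {n : ℕ} (hn : 0 < n) :
    R ≤ 1 / (n : ℝ) * Real.logb 2 ⌈(2 : ℝ) ^ (n * R)⌉₊ := by
  have hpow : 0 < (2 : ℝ) ^ (n * R) := by positivity
  have hlog : n * R ≤ Real.logb 2 ⌈(2 : ℝ) ^ (n * R)⌉₊ :=
    (Real.le_logb_iff_rpow_le one_lt_two (hpow.trans_le (Nat.le_ceil _))).2 (Nat.le_ceil _)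
  have hn' : (0 : ℝ) < n := Nat.cast_pos.2 hn
  calc R = 1 / (n : ℝ) * (n * R) := by field_simp
    _ ≤ 1 / (n : ℝ) * Real.logb 2 ⌈(2 : ℝ) ^ (n * R)⌉₊ := by gcongr

lemma exists_tendsto_zero_eventually {p : ℕ → ℝ → Prop} (h : ∀ ε > 0, ∀ᶠ n in atTop, p n ε) :
    ∃ e : ℕ → ℝ, Tendsto e atTop (nhds 0) ∧ ∀ᶠ n in atTop, p n (e n) := by
  obtain ⟨φ, hφ, hφp⟩ := extraction_forall_of_eventually'
    (P := fun k m => ∀ n ≥ m, p n (1 / ((k : ℝ) + 1))) fun k => by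
      obtain ⟨N, hN⟩ := eventually_atTop.1 (h _ (by positivity : (0 : ℝ) < 1 / ((k : ℝ) + 1)))
      exact ⟨N, fun m hm n hn => hN n (hm.trans hn)⟩
  -- `K n` is the largest `k` whose threshold `φ k` has been passed by `n`
  set K : ℕ → ℕ := fun n => Nat.findGreatest (fun k => φ k ≤ n) n
  have hK : Tendsto K atTop atTop := tendsto_atTop_atTop.2 fun k =>
    ⟨φ k, fun n hn => Nat.le_findGreatest ((hφ.id_le k).trans hn) hn⟩
  refine ⟨fun n => 1 / ((K n : ℝ) + 1), tendsto_one_div_add_atTop_nhds_zero_nat.comp hK, ?_⟩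
  filter_upwards [eventually_ge_atTop (φ 0)] with n hn
  exact hφp (K n) n (Nat.findGreatest_spec (P := fun k => φ k ≤ n) (Nat.zero_le n) hn)

section OneShot

variable {A B : Type*}

def jointDist (P : A → ℝ) (W : A → B → ℝ) (z : A × B) : ℝ := P z.1 * W z.1 z.2

lemma jointDist_nonneg {P : A → ℝ} {W : A → B → ℝ} (hP : ∀ a, 0 ≤ P a) (hW : ∀ a b, 0 ≤ W a b)
    (z : A × B) : 0 ≤ jointDist P W z :=
  mul_nonneg (hP _) (hW _ _)

noncomputable def testDecoder (T : Finset (A × B)) {M : ℕ} [NeZero M] (c : Fin M → A) (y : B) :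
    Fin M :=
  if h : ∃ i, (c i, y) ∈ T then h.choose else 0

section Decoder

variable {T : Finset (A × B)} {M : ℕ} [NeZero M] {c : Fin M → A}

lemma testDecoder_mem {y : B} {i : Fin M} (hi : (c i, y) ∈ T) :
    (c (testDecoder T c y), y) ∈ T := by
  have h : ∃ i, (c i, y) ∈ T := ⟨i, hi⟩
  rw [testDecoder, dif_pos h]
  exact h.choose_spec

lemma indicator_testDecoder_ne_le (i : Fin M) (y : B) :
    (if testDecoder T c y ≠ i then (1 : ℝ) else 0) ≤
      (if (c i, y) ∈ T then 0 else 1) + ∑ j ∈ univ.erase i, if (c j, y) ∈ T then 1 else 0 := by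
  have hsum : 0 ≤ ∑ j ∈ univ.erase i, if (c j, y) ∈ T then (1 : ℝ) else 0 :=
    sum_nonneg fun _ _ => by split_ifs <;> norm_num
  by_cases hdec : testDecoder T c y = i
  · simp only [hdec, ne_eq, not_true_eq_false, if_false]
    split_ifs <;> linarith
  by_cases hi : (c i, y) ∈ T
  · -- the decoded message differs from `i` but also passes the test
    have hone : (1 : ℝ) ≤ ∑ j ∈ univ.erase i, if (c j, y) ∈ T then 1 else 0 := by
      simpa [testDecoder_mem hi] using single_le_sum (fun j _ => by split_ifs <;> norm_num)
        (mem_erase.2 ⟨hdec, mem_univ _⟩) (f := fun j => if (c j, y) ∈ T then (1 : ℝ) else 0)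
    simp only [hdec, hi, ne_eq, not_false_eq_true, if_true]
    linarith
  · simp only [hdec, hi, ne_eq, not_false_eq_true, if_true, if_false]
    linarith

end Decoder

variable [Fintype A]

/-- `P_X × P_Y`, where `P_Y` is the output distribution of `W` on input `P`. -/
def productDist (P : A → ℝ) (W : A → B → ℝ) (z : A × B) : ℝ := P z.1 * ∑ a, P a * W a z.2

lemma productDist_nonneg {P : A → ℝ} {W : A → B → ℝ} (hP : ∀ a, 0 ≤ P a)
    (hW : ∀ a b, 0 ≤ W a b) (z : A × B) : 0 ≤ productDist P W z :=
  mul_nonneg (hP _) (sum_nonneg fun a _ => mul_nonneg (hP a) (hW a _))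

variable [Fintype B] {P : A → ℝ} {W : A → B → ℝ}

lemma sum_jointDist (hP : IsPmf P) (hW : ∀ a, IsPmf (W a)) : ∑ z, jointDist P W z = 1 := by
  simp [jointDist, Fintype.sum_prod_type, ← mul_sum, (hW _).2, hP.2]

lemma IsCode.mono {M : ℕ} {ε ε' : ℝ} (h : IsCode W M ε) (hε : ε ≤ ε') : IsCode W M ε' :=
  let ⟨f, g, hfg⟩ := h
  ⟨f, g, hfg.trans hε⟩

lemma isCode_one [Nonempty A] (W : A → B → ℝ) : IsCode W 1 0 :=
  ⟨fun _ => Classical.arbitrary A, fun _ => 0, by simp [Subsingleton.elim _ (0 : Fin 1)]⟩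

lemma sum_codebook_error_le (hP : IsPmf P) (hW : ∀ a b, 0 ≤ W a b) (T : Finset (A × B))
    {M : ℕ} [NeZero M] (i : Fin M) :
    ∑ c : Fin M → A, (∏ k, P (c k)) * ∑ y ∈ univ.filter (fun y => testDecoder T c y ≠ i), W (c i) y
      ≤ ∑ z ∈ Tᶜ, jointDist P W z + (M - 1) * ∑ z ∈ T, productDist P W z := by
  have hw : ∀ c : Fin M → A, 0 ≤ ∏ k, P (c k) := fun c => prod_nonneg fun k _ => hP.1 _
  have hmiss : ∑ c : Fin M → A, (∏ k, P (c k)) *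
      ∑ y, W (c i) y * (if (c i, y) ∈ T then 0 else 1) = ∑ z ∈ Tᶜ, jointDist P W z := by
    rw [sum_pi_prod_mul_apply hP.2 i fun a => ∑ y, W a y * if (a, y) ∈ T then 0 else 1,
      ← sum_ite_mem_eq Tᶜ, Fintype.sum_prod_type]
    refine sum_congr rfl fun a _ => ?_
    rw [mul_sum]
    refine sum_congr rfl fun y _ => ?_
    simp only [jointDist, mem_compl]
    split_ifs <;> ring
  have hfalse : ∀ j ∈ univ.erase i, ∑ c : Fin M → A, (∏ k, P (c k)) *
      ∑ y, W (c i) y * (if (c j, y) ∈ T then 1 else 0) = ∑ z ∈ T, productDist P W z := by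
    intro j hj
    calc _ = ∑ y, ∑ c : Fin M → A, (∏ k, P (c k)) *
          (W (c i) y * if (c j, y) ∈ T then 1 else 0) := by
          simp_rw [mul_sum]
          exact sum_comm
      _ = ∑ y, (∑ a, P a * W a y) * ∑ a, P a * if (a, y) ∈ T then 1 else 0 :=
          sum_congr rfl fun y _ => sum_pi_prod_mul_apply_mul_apply_s17 hP.2 (ne_of_mem_erase hj).symm
            (fun a => W a y) fun a => if (a, y) ∈ T then 1 else 0
      _ = ∑ z ∈ T, productDist P W z := by
          rw [← sum_ite_mem_eq T, Fintype.sum_prod_type, sum_comm]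
          refine sum_congr rfl fun y _ => ?_
          rw [mul_sum]
          refine sum_congr rfl fun a _ => ?_
          simp only [productDist]
          split_ifs <;> ring
  calc ∑ c : Fin M → A, (∏ k, P (c k)) *
        ∑ y ∈ univ.filter (fun y => testDecoder T c y ≠ i), W (c i) y
      = ∑ c : Fin M → A, (∏ k, P (c k)) *
          ∑ y, W (c i) y * (if testDecoder T c y ≠ i then 1 else 0) := by
        simp only [sum_filter, mul_ite, mul_one, mul_zero]
    _ ≤ ∑ c : Fin M → A, (∏ k, P (c k)) * ∑ y, W (c i) y *
          ((if (c i, y) ∈ T then 0 else 1) + ∑ j ∈ univ.erase i, if (c j, y) ∈ T then 1 else 0) := by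
        gcongr with c _ y _
        · exact hw c
        · exact hW _ _
        · exact indicator_testDecoder_ne_le i y
    _ = ∑ c : Fin M → A, (∏ k, P (c k)) * ∑ y, W (c i) y * (if (c i, y) ∈ T then 0 else 1) +
          ∑ j ∈ univ.erase i, ∑ c : Fin M → A, (∏ k, P (c k)) *
            ∑ y, W (c i) y * (if (c j, y) ∈ T then 1 else 0) := by
        simp only [mul_add, mul_sum, sum_add_distrib]
        congr 1
        exact (sum_congr rfl fun c _ => sum_comm).trans sum_comm
    _ = ∑ z ∈ Tᶜ, jointDist P W z + (M - 1) * ∑ z ∈ T, productDist P W z := by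
        rw [hmiss, sum_congr rfl hfalse, sum_const, card_erase_of_mem (mem_univ i), card_univ,
          Fintype.card_fin, nsmul_eq_mul, Nat.cast_pred (Nat.pos_of_neZero M)]

theorem isCode_of_test (hP : IsPmf P) (hW : ∀ a b, 0 ≤ W a b) (T : Finset (A × B)) (M : ℕ)
    [NeZero M] : IsCode W M (∑ z ∈ Tᶜ, jointDist P W z + (M - 1) * ∑ z ∈ T, productDist P W z) := by
  set ε := ∑ z ∈ Tᶜ, jointDist P W z + (M - 1) * ∑ z ∈ T, productDist P W z
  have hw₁ : ∑ c : Fin M → A, ∏ k, P (c k) = 1 := by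
    simpa using sum_pi_prod_mul_prod_s17 hP.2 (∅ : Finset (Fin M)) fun _ _ => 1
  have hM : (M : ℝ) ≠ 0 := Nat.cast_ne_zero.2 (NeZero.ne M)
  obtain ⟨c, hc⟩ := exists_le_of_sum_mul_le (fun c => prod_nonneg fun k _ => hP.1 (c k)) hw₁
    (f := fun c => (1 / M : ℝ) * ∑ i : Fin M,
      ∑ y ∈ univ.filter (fun y => testDecoder T c y ≠ i), W (c i) y) (t := ε) <| by
    calc ∑ c : Fin M → A, (∏ k, P (c k)) * ((1 / M : ℝ) * ∑ i : Fin M,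
          ∑ y ∈ univ.filter (fun y => testDecoder T c y ≠ i), W (c i) y)
        = (1 / M : ℝ) * ∑ i : Fin M, ∑ c : Fin M → A, (∏ k, P (c k)) *
            ∑ y ∈ univ.filter (fun y => testDecoder T c y ≠ i), W (c i) y := by
          simp only [mul_sum, mul_left_comm (1 / M : ℝ)]
          exact sum_comm
      _ ≤ (1 / M : ℝ) * ∑ _i : Fin M, ε := by
          gcongr with i
          exact sum_codebook_error_le hP hW T i
      _ = ε := by simp [field]
  exact ⟨c, testDecoder T c, hc⟩

theorem isCode_of_lt_D0smooth (hP : IsPmf P) (hW : ∀ a, IsPmf (W a)) {δ r : ℝ}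
    (hr : (r : EReal) < D0smooth (jointDist P W) (productDist P W) δ) (M : ℕ) [NeZero M] :
    IsCode W M (2 * δ + M * (2 * 2 ^ (-r))) := by
  obtain ⟨_, ⟨Φ, hΦ, hΦJ, rfl⟩, hΦQ⟩ := lt_sSup_iff.1 hr
  have hW₀ : ∀ a b, 0 ≤ W a b := fun a => (hW a).1
  have hJ := jointDist_nonneg hP.1 hW₀
  have hQ := productDist_nonneg hP.1 hW₀
  set T := univ.filter fun z => 1 / 2 ≤ Φ z
  have hmiss : ∑ z ∈ Tᶜ, jointDist P W z ≤ 2 * δ :=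
    calc ∑ z ∈ Tᶜ, jointDist P W z ≤ 2 * ∑ z, (1 - Φ z) * jointDist P W z :=
          sum_le_two_mul_sum_mul (fun z => by linarith [hΦ z])
            (fun z hz => by
              simp only [T, mem_compl, mem_filter, mem_univ, true_and] at hz
              linarith) hJ
      _ ≤ 2 * δ := by
          simp only [sub_mul, one_mul, sum_sub_distrib, sum_jointDist hP hW]
          linarith
  have hfalse : ∑ z ∈ T, productDist P W z ≤ 2 * 2 ^ (-r) :=
    calc ∑ z ∈ T, productDist P W z ≤ 2 * ∑ z, Φ z * productDist P W z :=
          sum_le_two_mul_sum_mul (fun z => (hΦ z).1) (fun z hz => (mem_filter.1 hz).2) hQ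
      _ ≤ 2 * 2 ^ (-r) := by
          gcongr
          exact le_two_rpow_neg_of_coe_lt_negLog2
            (sum_nonneg fun z _ => mul_nonneg (hΦ z).1 (hQ z)) hΦQ
  refine (isCode_of_test hP hW₀ T M).mono (add_le_add hmiss ?_)
  exact mul_le_mul (by linarith) hfalse (sum_nonneg fun z _ => hQ z) (Nat.cast_nonneg M)

theorem isCode_of_lt_supD0 (hW : ∀ a, IsPmf (W a)) {δ r : ℝ} (hr : (r : EReal) < supD0 W δ)
    (M : ℕ) [NeZero M] : IsCode W M (2 * δ + M * (2 * 2 ^ (-r))) := by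
  obtain ⟨P, hP⟩ := lt_iSup_iff.1 hr
  exact isCode_of_lt_D0smooth P.2 hW hP M

lemma nonempty_of_supD0_ne_bot {δ : ℝ} (h : supD0 W δ ≠ ⊥) : Nonempty A := by
  by_contra hA
  have : IsEmpty { p : A → ℝ // IsPmf p } :=
    ⟨fun p => by simpa [not_nonempty_iff.1 hA] using p.2.2⟩
  exact h (iSup_of_empty _)

end OneShot

lemma eventually_exists_code_of_lt_liminf {A B : ℕ → Type*} [∀ n, Fintype (A n)]
    [∀ n, Fintype (B n)] (W : ∀ n, A n → B n → ℝ) (hW : ∀ n a, IsPmf (W n a)) {R δ : ℝ}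
    (hδ : 0 < δ)
    (hR : (R : EReal) < liminf (fun n : ℕ => ((1 / (n : ℝ) : ℝ) : EReal) * supD0 (W n) δ) atTop) :
    ∀ᶠ n in atTop, ∃ M : ℕ, 1 ≤ M ∧ IsCode (W n) M (3 * δ) ∧
      R ≤ 1 / (n : ℝ) * Real.logb 2 M := by
  obtain ⟨R', hRR', hR'⟩ := EReal.exists_between_coe_real hR
  have hsup : ∀ᶠ n : ℕ in atTop, ((n * R' : ℝ) : EReal) < supD0 (W n) δ := by
    filter_upwards [eventually_lt_of_lt_liminf hR', eventually_gt_atTop 0] with n hn hn₀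
    exact EReal.coe_mul_lt_of_lt_one_div_mul (Nat.cast_pos.2 hn₀) hn
  rcases le_or_gt R 0 with hR₀ | hR₀
  · filter_upwards [hsup] with n hn
    have := nonempty_of_supD0_ne_bot (ne_bot_of_gt hn)
    exact ⟨1, le_rfl, (isCode_one _).mono (by positivity), by simpa using hR₀⟩
  have hq : (2 : ℝ) ^ (R - R') < 1 :=
    Real.rpow_lt_one_of_one_lt_of_neg one_lt_two (by linarith [EReal.coe_lt_coe_iff.1 hRR'])
  have hsmall : ∀ᶠ n : ℕ in atTop, 4 * ((2 : ℝ) ^ (R - R')) ^ n ≤ δ :=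
    ((tendsto_pow_atTop_nhds_zero_of_lt_one (by positivity) hq).const_mul 4).eventually
      (ge_mem_nhds (by simpa using hδ))
  filter_upwards [hsup, hsmall, eventually_gt_atTop 0] with n hn hn_small hn₀
  set M := ⌈(2 : ℝ) ^ (n * R)⌉₊
  have hpow : 1 ≤ (2 : ℝ) ^ (n * R) := Real.one_le_rpow one_le_two (by positivity)
  have hM : 1 ≤ M := Nat.one_le_iff_ne_zero.2 (by positivity)
  have : NeZero M := ⟨by omega⟩
  refine ⟨M, hM, (isCode_of_lt_supD0 (hW n) hn M).mono ?_, le_one_div_mul_logb_ceil_rpow R hn₀⟩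
  have hM2 : (M : ℝ) ≤ 2 * 2 ^ (n * R) := Nat.ceil_le_two_mul (by linarith)
  have hexp : (2 : ℝ) ^ (n * R) * 2 ^ (-(n * R')) = ((2 : ℝ) ^ (R - R')) ^ n := by
    rw [← Real.rpow_add two_pos, ← Real.rpow_mul_natCast zero_le_two]
    ring_nf
  calc 2 * δ + M * (2 * 2 ^ (-(n * R'))) ≤ 2 * δ + 2 * 2 ^ (n * R) * (2 * 2 ^ (-(n * R'))) := by
        gcongr
    _ = 2 * δ + 4 * ((2 : ℝ) ^ (R - R')) ^ n := by rw [← hexp]; ring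
    _ ≤ 3 * δ := by linarith

/-- Capacity lower bound: every rate `R` below
`lim_{ε↓0} liminf_n (1/n)·sup_{P_{Xⁿ}} D₀^ε(P_{XⁿYⁿ}‖P_{Xⁿ}×P_{Yⁿ})` is achievable
by codes with vanishing error probability; hence `C` is at least this limit. -/
theorem capacity_lower_bound {X Y : Type*} [Fintype X] [Fintype Y]
    (C : ∀ n : ℕ, (Fin n → X) → (Fin n → Y) → ℝ)
    (hC : ∀ n xs, IsPmf (C n xs)) (R : ℝ)
    (hR : (R : EReal) < ⨅ (ε : ℝ) (_ : 0 < ε),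
        liminf (fun n : ℕ => ((1 / (n:ℝ) : ℝ) : EReal) * supD0 (C n) ε) atTop) :
    ∃ (N : ℕ) (M : ℕ → ℕ) (e : ℕ → ℝ),
      Tendsto e atTop (nhds 0) ∧
      ∀ n, N ≤ n → 1 ≤ M n ∧ IsCode (C n) (M n) (e n) ∧
        R ≤ (1 / (n:ℝ)) * Real.logb 2 (M n) := by
  have hcodes : ∀ ε > 0, ∀ᶠ n in atTop,
      ∃ M : ℕ, 1 ≤ M ∧ IsCode (C n) M ε ∧ R ≤ 1 / (n : ℝ) * Real.logb 2 M := by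
    intro ε hε
    have hδ : 0 < ε / 3 := by positivity
    simpa [mul_div_cancel₀] using
      eventually_exists_code_of_lt_liminf C hC hδ (hR.trans_le (iInf₂_le _ hδ))
  obtain ⟨e, he, hcodes_e⟩ := exists_tendsto_zero_eventually hcodes
  obtain ⟨N, hN⟩ := eventually_atTop.1 hcodes_e
  choose! M hM using hN
  exact ⟨N, M, e, he, hM⟩
end

section
/- (ε-capacity upper bound) For any general channel with finite alphabets and any ε ∈ (0,1), the ε-capacity satisfies C_ε ≤ liminf_{n→∞} (1/n) sup_{P_{X^n}} D₀^ε(P_{X^nY^n} ‖ P_{X^n} × P_{Y^n}). -/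
open scoped BigOperators Classical

open Filter

/-!
Single-shot converse (a hypothesis test built from the code): feed the channel the empirical
distribution `P_X` of the codewords, and test with `Φ(a, b) = 1[f (g b) = a] / #f⁻¹{a}`, i.e.
"the decoded message is sent as `a`". Then `P_X(a) Φ(a, b) = 1[f (g b) = a] / M`, so under
`P_{XY}` the test accepts with the success probability `≥ 1 - ε` of the code, while under
`P_X × P_Y` it accepts with probability exactly `1 / M`. Hence `log₂ M ≤ D₀^ε`, and dividing by
`n` along the achieving codes gives the bound on the `liminf`.
-/

open Finset

section SingleShot

variable {A B : Type*} {M : ℕ} (f : Fin M → A) (g : B → Fin M)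

noncomputable def avgError [Fintype B] (W : A → B → ℝ) : ℝ :=
  (1 / M : ℝ) * ∑ i : Fin M, ∑ y ∈ univ.filter (fun y => g y ≠ i), W (f i) y

lemma isCode_iff_exists_avgError_le [Fintype A] [Fintype B] (W : A → B → ℝ) (ε : ℝ) :
    IsCode W M ε ↔ ∃ (f : Fin M → A) (g : B → Fin M), avgError f g W ≤ ε :=
  Iff.rfl

noncomputable def codewordCount (a : A) : ℕ := #(univ.filter (fun i => f i = a))

lemma codewordCount_pos (i : Fin M) : 0 < codewordCount f (f i) :=
  card_pos.2 ⟨i, by simp⟩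

lemma sum_codewordCount [Fintype A] : ∑ a, (codewordCount f a : ℝ) = M := by
  have h := card_eq_sum_card_fiberwise (f := f) (s := univ) (t := univ) (by simp)
  exact_mod_cast (by simpa [codewordCount] using h.symm : ∑ a, codewordCount f a = M)

noncomputable def codeInputDist (a : A) : ℝ := codewordCount f a / M

lemma isPmf_codeInputDist [Fintype A] (hM : 0 < M) : IsPmf (codeInputDist f) :=
  ⟨fun _ => by unfold codeInputDist; positivity, by
    simp only [codeInputDist]
    rw [← sum_div, sum_codewordCount, div_self (by positivity)]⟩

noncomputable def codeTest (q : A × B) : ℝ :=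
  if f (g q.2) = q.1 then (codewordCount f q.1 : ℝ)⁻¹ else 0

lemma codeTest_mem_Icc (q : A × B) : 0 ≤ codeTest f g q ∧ codeTest f g q ≤ 1 := by
  unfold codeTest
  split_ifs with h
  · have : (1 : ℝ) ≤ codewordCount f q.1 := by exact_mod_cast h ▸ codewordCount_pos f (g q.2)
    exact ⟨by positivity, inv_le_one_of_one_le₀ this⟩
  · exact ⟨le_rfl, zero_le_one⟩

lemma codeInputDist_mul_codeTest (a : A) (b : B) :
    codeInputDist f a * codeTest f g (a, b) = if f (g b) = a then (1 / M : ℝ) else 0 := by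
  unfold codeTest codeInputDist
  split_ifs with h
  · have : (codewordCount f a : ℝ) ≠ 0 := by exact_mod_cast (h ▸ codewordCount_pos f (g b)).ne'
    field_simp
  · rw [mul_zero]

lemma sum_codeTest_mul [Fintype A] [Fintype B] (V : A → B → ℝ) :
    ∑ q : A × B, codeTest f g q * (codeInputDist f q.1 * V q.1 q.2)
      = 1 / M * ∑ b, V (f (g b)) b := by
  simp_rw [← mul_assoc, mul_comm (codeTest f g _), Fintype.sum_prod_type,
    codeInputDist_mul_codeTest, ite_mul, zero_mul]
  rw [sum_comm, mul_sum]
  simp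

lemma one_sub_avgError [Fintype B] {W : A → B → ℝ} (hW : ∀ a, IsPmf (W a)) (hM : 0 < M) :
    1 - avgError f g W = 1 / M * ∑ b, W (f (g b)) b := by
  have hsucc : ∀ i : Fin M, ∑ b ∈ univ.filter (fun b => g b = i), W (f i) b
      = 1 - ∑ b ∈ univ.filter (fun b => g b ≠ i), W (f i) b := fun i => by
    rw [← (hW (f i)).2, ← sum_filter_add_sum_filter_not univ (fun b => g b = i)]
    ring
  have hfiber : ∑ b, W (f (g b)) b
      = ∑ i : Fin M, ∑ b ∈ univ.filter (fun b => g b = i), W (f i) b := by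
    rw [← sum_fiberwise_of_maps_to (g := g) (t := univ) (by simp)]
    exact sum_congr rfl fun i _ => sum_congr rfl fun b hb => by rw [(mem_filter.1 hb).2]
  rw [hfiber, sum_congr rfl fun i _ => hsucc i, sum_sub_distrib, avgError]
  simp only [sum_const, card_univ, Fintype.card_fin, nsmul_eq_mul, mul_one]
  field_simp

lemma sum_sum_codeInputDist_mul [Fintype A] [Fintype B] {W : A → B → ℝ}
    (hW : ∀ a, IsPmf (W a)) (hM : 0 < M) :
    ∑ b, ∑ a, codeInputDist f a * W a b = 1 := by
  rw [sum_comm]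
  simp_rw [← mul_sum, (hW _).2, mul_one]
  exact (isPmf_codeInputDist f hM).2

end SingleShot

lemma negLog2_one_div_natCast {M : ℕ} (hM : 0 < M) :
    negLog2 (1 / M) = (Real.logb 2 M : EReal) := by
  rw [negLog2, if_neg (by positivity), one_div, Real.logb_inv, neg_neg]

lemma logb_le_D0smooth_of_isCode {A B : Type*} [Fintype A] [Fintype B] {W : A → B → ℝ}
    (hW : ∀ a, IsPmf (W a)) {ε : ℝ} {M : ℕ} (hM : 0 < M) (f : Fin M → A) (g : B → Fin M)
    (herr : avgError f g W ≤ ε) :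
    (Real.logb 2 M : EReal) ≤
      D0smooth (fun q : A × B => codeInputDist f q.1 * W q.1 q.2)
        (fun q : A × B => codeInputDist f q.1 * ∑ a, codeInputDist f a * W a q.2) ε := by
  refine le_sSup ⟨codeTest f g, codeTest_mem_Icc f g, ?_, ?_⟩
  · rw [sum_codeTest_mul, ← one_sub_avgError f g hW hM]
    linarith
  · rw [sum_codeTest_mul f g (fun _ b => ∑ a, codeInputDist f a * W a b),
      sum_sum_codeInputDist_mul f hW hM, mul_one, negLog2_one_div_natCast hM]

lemma logb_le_supD0_of_isCode {A B : Type*} [Fintype A] [Fintype B] {W : A → B → ℝ}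
    (hW : ∀ a, IsPmf (W a)) {ε : ℝ} {M : ℕ} (hM : 0 < M) (hcode : IsCode W M ε) :
    (Real.logb 2 M : EReal) ≤ supD0 W ε := by
  obtain ⟨f, g, herr⟩ := (isCode_iff_exists_avgError_le W ε).1 hcode
  exact (logb_le_D0smooth_of_isCode hW hM f g herr).trans
    (le_iSup_of_le ⟨codeInputDist f, isPmf_codeInputDist f hM⟩ le_rfl)

theorem eps_capacity_upper_bound_general {X Y : Type*} [Fintype X] [Fintype Y]
    (C : ∀ n : ℕ, (Fin n → X) → (Fin n → Y) → ℝ)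
    (hC : ∀ n xs, IsPmf (C n xs))
    (ε : ℝ) (R : ℝ)
    (hach : ∃ N : ℕ, ∀ n, N ≤ n → ∃ M : ℕ, 1 ≤ M ∧ IsCode (C n) M ε ∧
        R ≤ (1 / (n:ℝ)) * Real.logb 2 M) :
    (R : EReal) ≤ liminf
      (fun n : ℕ => ((1 / (n:ℝ) : ℝ) : EReal) * supD0 (C n) ε) atTop := by
  obtain ⟨N, hN⟩ := hach
  refine le_liminf_of_le (by isBoundedDefault) ?_
  filter_upwards [eventually_ge_atTop N] with n hn
  obtain ⟨M, hM, hcode, hR⟩ := hN n hn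
  calc (R : EReal) ≤ ((1 / (n:ℝ) * Real.logb 2 M : ℝ) : EReal) := EReal.coe_le_coe_iff.2 hR
    _ = ((1 / (n:ℝ) : ℝ) : EReal) * (Real.logb 2 M : EReal) := EReal.coe_mul _ _
    _ ≤ ((1 / (n:ℝ) : ℝ) : EReal) * supD0 (C n) ε :=
      mul_le_mul_of_nonneg_left (logb_le_supD0_of_isCode (hC n) hM hcode)
        (EReal.coe_nonneg.2 (by positivity))

/-- `ε`-capacity upper bound: if rate `R` is achievable with error probability `ε`
for all sufficiently large `n`, then
`R ≤ liminf_n (1/n)·sup_{P_{Xⁿ}} D₀^ε(P_{XⁿYⁿ}‖P_{Xⁿ}×P_{Yⁿ})`. -/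
theorem eps_capacity_upper_bound {X Y : Type*} [Fintype X] [Fintype Y]
    (C : ∀ n : ℕ, (Fin n → X) → (Fin n → Y) → ℝ)
    (hC : ∀ n xs, IsPmf (C n xs))
    (ε : ℝ) (hε0 : 0 < ε) (hε1 : ε < 1) (R : ℝ)
    (hach : ∃ N : ℕ, ∀ n, N ≤ n → ∃ M : ℕ, 1 ≤ M ∧ IsCode (C n) M ε ∧
        R ≤ (1 / (n:ℝ)) * Real.logb 2 M) :
    (R : EReal) ≤ liminf
      (fun n : ℕ => ((1 / (n:ℝ) : ℝ) : EReal) * supD0 (C n) ε) atTop :=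
  eps_capacity_upper_bound_general C hC ε R hach
end
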